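/- arXiv:math/9906115 — 10 statements merged into one kernel-verified Lean document; each statement's English description precedes it below -/
import Mathlib

section
/- For every rack X, every abelian group A, every n ≥ 1 and every function f : X^n → A, the coboundary of the coboundary of f vanishes: δ(δf) = 0. Consequently the groups C^n(X;A) of n-cochains together with δ form a cochain complex. -/
/-!
Write `δ = ∑ᵢ (-1)ⁱ ∂ᵢ` with `∂ᵢ f = f ∘ dᵢ⁰ - f ∘ dᵢ¹`, where `dᵢ⁰` deletes a coordinate and `dᵢ¹`
first acts by it on the coordinates to its left. Self-distributivity (III) gives the cubical
identities `d_b^ε ∘ d_{a+1}^η = d_a^η ∘ d_b^ε` for `b ≤ a`, hence `∂_{a+1} ∂_b = ∂_b ∂_a`, and the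
terms of `δδ = ∑ (-1)^{i+j} ∂ᵢ ∂ⱼ` cancel in pairs exactly as for a simplicial object.
-/

/-- The rack-cohomology coboundary operator.  For an `n`-cochain
`f : Xⁿ → A` and `x : Xⁿ⁺¹`, the value `(δ f)(x₀,…,xₙ)` is
`∑_{i=1}^{n} (−1)^{i−1} f(x₀,…,x̂ᵢ,…,xₙ)
 + ∑_{j=1}^{n} (−1)^{j} f(x₀∗x_j,…,x_{j−1}∗x_j, x_{j+1},…,xₙ)`. -/
def qdelta {X A : Type*} [AddCommGroup A] (op : X → X → X) {n : ℕ}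
    (f : (Fin n → X) → A) : (Fin (n + 1) → X) → A :=
  fun x =>
    (∑ i : Fin n, ((-1 : ℤ) ^ (i : ℕ)) • f (x ∘ (Fin.succ i).succAbove))
      + ∑ j : Fin n, ((-1 : ℤ) ^ ((j : ℕ) + 1)) •
          f (fun k => if (k : ℕ) < (j : ℕ) + 1 then op (x k.castSucc) (x j.succ)
              else x k.succ)

/-- The involution `(i, j) ↦ (i.succAbove j, j.predAbove i)` pairs `(a.succ, b)` with
`(b.castSucc, a)` for `b ≤ a`. -/
theorem Fin.sum_sum_eq_zero_of_succ_castSucc {A : Type*} [AddCommMonoid A] {n : ℕ}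
    (T : Fin (n + 1) → Fin n → A)
    (hT : ∀ a b : Fin n, b ≤ a → T a.succ b + T b.castSucc a = 0) :
    ∑ i, ∑ j, T i j = 0 := by
  rw [← Fintype.sum_prod_type']
  refine Finset.sum_ninvolution (fun p => (p.1.succAbove p.2, p.2.predAbove p.1))
    (fun ⟨i, j⟩ => ?_) (fun ⟨i, j⟩ _ h => Fin.succAbove_ne i j (congrArg Prod.fst h))
    (fun _ => Finset.mem_univ _)
    (fun ⟨i, j⟩ => Prod.ext (Fin.succAbove_succAbove_predAbove i j)
      (Fin.predAbove_predAbove_succAbove i j))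
  rcases j.castSucc.lt_or_ge i with h | h
  · obtain ⟨a, rfl⟩ := Fin.exists_succ_eq.2 (Fin.ne_zero_of_lt h)
    rw [Fin.succAbove_of_castSucc_lt _ _ h, Fin.predAbove_of_castSucc_lt _ _ h, Fin.pred_succ]
    exact hT a j (Fin.castSucc_lt_succ_iff.1 h)
  · obtain ⟨b, rfl⟩ :=
      Fin.exists_castSucc_eq.2 (Fin.ne_last_of_lt (h.trans_lt j.castSucc_lt_last))
    rw [Fin.succAbove_of_le_castSucc _ _ h, Fin.predAbove_of_le_castSucc _ _ h,
      Fin.castPred_castSucc, add_comm]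
    exact hT j b (Fin.castSucc_le_castSucc_iff.1 h)

section RackFaces

variable {X A : Type*} [AddCommGroup A] (op : X → X → X)

/-- The `i`-th face (`i` standing for the paper's `i + 1`): `ε = false` deletes `x_{i+1}`,
`ε = true` deletes it after acting by it on `x₀, …, xᵢ`. -/
def rackFace (ε : Bool) {m : ℕ} (i : Fin m) (x : Fin (m + 1) → X) : Fin m → X :=
  fun k => if (k : ℕ) < (i : ℕ) + 1
    then (if ε then op (x k.castSucc) (x i.succ) else x k.castSucc)
    else x k.succ

theorem rackFace_false {m : ℕ} (i : Fin m) (x : Fin (m + 1) → X) :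
    rackFace op false i x = x ∘ i.succ.succAbove := by
  funext k
  simp only [rackFace, Bool.false_eq_true, if_false, Function.comp_apply, Fin.succAbove,
    Fin.lt_def, Fin.val_castSucc, Fin.val_succ]
  split_ifs <;> rfl

theorem rackFace_rackFace (hIII : ∀ a b c : X, op (op a b) c = op (op a c) (op b c))
    {m : ℕ} (ε η : Bool) {a b : Fin m} (hba : b ≤ a) (x : Fin (m + 2) → X) :
    rackFace op ε b (rackFace op η a.succ x) =
      rackFace op η a (rackFace op ε b.castSucc x) := by
  rw [Fin.le_def] at hba
  funext k
  cases ε <;> cases η <;>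
    simp only [rackFace, Fin.val_castSucc, Fin.val_succ, Fin.succ_castSucc, if_true, if_false,
      Bool.false_eq_true] <;>
    -- (III) is needed only for `ε = η = true` on the coordinates `k ≤ b`
    split_ifs <;> first | rfl | omega | exact (hIII _ _ _).symm

def faceDiff {m : ℕ} (i : Fin m) : ((Fin m → X) → A) →+ ((Fin (m + 1) → X) → A) where
  toFun f x := f (rackFace op false i x) - f (rackFace op true i x)
  map_zero' := by ext; simp
  map_add' f g := by ext; simp only [Pi.add_apply]; abel

theorem faceDiff_faceDiff (hIII : ∀ a b c : X, op (op a b) c = op (op a c) (op b c))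
    {m : ℕ} {a b : Fin m} (hba : b ≤ a) (f : (Fin m → X) → A) :
    faceDiff op a.succ (faceDiff op b f) = faceDiff op b.castSucc (faceDiff op a f) := by
  ext x
  simp only [faceDiff, AddMonoidHom.coe_mk, ZeroHom.coe_mk,
    rackFace_rackFace op hIII _ _ hba]
  abel

theorem qdelta_eq_sum_faceDiff {n : ℕ} (f : (Fin n → X) → A) :
    qdelta op f = ∑ i : Fin n, (-1 : ℤ) ^ (i : ℕ) • faceDiff op i f := by
  ext x
  rw [qdelta, ← Finset.sum_add_distrib, Finset.sum_apply]
  refine Finset.sum_congr rfl fun i _ => ?_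
  rw [pow_succ, mul_neg_one, neg_smul, ← sub_eq_add_neg, ← smul_sub, ← rackFace_false]
  rfl

end RackFaces

theorem rack_coboundary_comp_coboundary_eq_zero_general {X A : Type*} [AddCommGroup A]
    (op : X → X → X)
    (hIII : ∀ a b c : X, op (op a b) c = op (op a c) (op b c))
    (n : ℕ) (f : (Fin n → X) → A) :
    qdelta op (qdelta op f) = 0 := by
  simp only [qdelta_eq_sum_faceDiff, map_sum, map_zsmul, Finset.smul_sum]
  refine Fin.sum_sum_eq_zero_of_succ_castSucc _ fun a b hba => ?_
  rw [faceDiff_faceDiff op hIII hba f, Fin.val_succ, Fin.val_castSucc, pow_succ, mul_neg_one,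
    neg_smul, smul_comm ((-1 : ℤ) ^ (b : ℕ)), neg_add_cancel]

/-- For every rack `X`, every abelian group `A`, every `n ≥ 1` and every
`n`-cochain `f : Xⁿ → A`, one has `δ(δ f) = 0`; hence the cochain groups with
`δ` form a cochain complex. -/
theorem rack_coboundary_comp_coboundary_eq_zero {X A : Type*} [AddCommGroup A]
    (op : X → X → X)
    (hII : ∀ a b : X, ∃! c : X, op c b = a)
    (hIII : ∀ a b c : X, op (op a b) c = op (op a c) (op b c))
    (n : ℕ) (hn : 1 ≤ n) (f : (Fin n → X) → A) :
    qdelta op (qdelta op f) = 0 :=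
  rack_coboundary_comp_coboundary_eq_zero_general op hIII n f
end

section
/- Let X be a quandle and A an abelian group. If an n-cochain f : X^n → A satisfies f(x₁,…,xₙ) = 0 whenever x_j = x_{j+1} for some j (i.e., f lies in the degenerate subgroup P^n), then its coboundary δf satisfies (δf)(x₀,…,xₙ) = 0 whenever x_j = x_{j+1} for some j (i.e., δf lies in P^{n+1}). -/
/-- `f` lies in the degenerate subgroup `Pⁿ`: it vanishes on every tuple with
two equal consecutive entries. -/
def isDegenerate {X A : Type*} [Zero A] {n : ℕ} (f : (Fin n → X) → A) : Prop :=
  ∀ x : Fin n → X,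
    (∃ j : Fin n, ∃ hj : (j : ℕ) + 1 < n, x j = x ⟨(j : ℕ) + 1, hj⟩) → f x = 0

/-- For a quandle `X` and abelian group `A`: if an `n`-cochain `f : Xⁿ → A`
lies in `Pⁿ` (it vanishes whenever two consecutive arguments agree), then its
coboundary `δ f` lies in `Pⁿ⁺¹`. -/
theorem quandle_coboundary_mem_degenerate {X A : Type*} [AddCommGroup A]
    (op : X → X → X)
    (hI : ∀ a : X, op a a = a)
    (hII : ∀ a b : X, ∃! c : X, op c b = a)
    (hIII : ∀ a b c : X, op (op a b) c = op (op a c) (op b c))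
    (n : ℕ) (f : (Fin n → X) → A) (hf : isDegenerate f) :
    isDegenerate (qdelta op f) := by
  intro x hx0
  obtain ⟨j, hj, heq⟩ := hx0
  have hp : (j : ℕ) < n := by omega
  set p := (j : ℕ) with hpdef
  have xeq : ∀ (a b : Fin (n + 1)), (a : ℕ) = (b : ℕ) → x a = x b := by
    intro a b h; congr 1; exact Fin.ext h
  have hx : ∀ (h1 : p < n + 1) (h2 : p + 1 < n + 1), x ⟨p, h1⟩ = x ⟨p + 1, h2⟩ := by
    intro h1 h2
    calc x ⟨p, h1⟩ = x j := xeq _ _ rfl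
    _ = x ⟨p + 1, hj⟩ := heq
    _ = x ⟨p + 1, h2⟩ := xeq _ _ rfl
  have hdeg : ∀ (g : Fin n → X) (m : ℕ) (hm : m + 1 < n),
      g ⟨m, by omega⟩ = g ⟨m + 1, hm⟩ → f g = 0 := by
    intro g m hm h
    exact hf g ⟨⟨m, by omega⟩, hm, h⟩
  have hAarg : ∀ i : Fin n, x ∘ (Fin.succ i).succAbove
      = fun k : Fin n => if (k : ℕ) < (i : ℕ) + 1 then x k.castSucc else x k.succ := by
    intro i; funext k
    simp only [Function.comp_apply]
    rcases Nat.lt_or_ge (k : ℕ) ((i : ℕ) + 1) with h | h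
    · rw [Fin.succAbove_of_castSucc_lt, if_pos h]
      simpa [Fin.lt_def] using h
    · rw [Fin.succAbove_of_le_castSucc, if_neg (by omega)]
      simpa [Fin.le_def] using h
  have hA0 : ∀ i : Fin n, (i : ℕ) ≠ p → (i : ℕ) + 1 ≠ p →
      f (fun k : Fin n => if (k : ℕ) < (i : ℕ) + 1 then x k.castSucc else x k.succ) = 0 := by
    intro i h1 h2
    rcases Nat.lt_or_ge p (i : ℕ) with h | h
    · apply hdeg _ p (by omega)
      simp only
      rw [if_pos (show p < (i : ℕ) + 1 by omega), if_pos (show p + 1 < (i : ℕ) + 1 by omega),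
        Fin.castSucc_mk, Fin.castSucc_mk]
      exact hx _ _
    · -- here p ≥ i + 2
      apply hdeg _ (p - 1) (by omega)
      simp only
      rw [if_neg (show ¬(p - 1 < (i : ℕ) + 1) by omega),
        if_neg (show ¬(p - 1 + 1 < (i : ℕ) + 1) by omega), Fin.succ_mk, Fin.succ_mk]
      exact (xeq _ ⟨p, by omega⟩ (show p - 1 + 1 = p by omega)).trans
        ((hx _ _).trans (xeq ⟨p + 1, by omega⟩ _ (show p + 1 = p - 1 + 1 + 1 by omega)))
  have hB0 : ∀ i : Fin n, (i : ℕ) ≠ p → (i : ℕ) + 1 ≠ p →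
      f (fun k : Fin n => if (k : ℕ) < (i : ℕ) + 1
          then op (x k.castSucc) (x i.succ) else x k.succ) = 0 := by
    intro i h1 h2
    rcases Nat.lt_or_ge p (i : ℕ) with h | h
    · apply hdeg _ p (by omega)
      simp only
      rw [if_pos (show p < (i : ℕ) + 1 by omega), if_pos (show p + 1 < (i : ℕ) + 1 by omega),
        Fin.castSucc_mk, Fin.castSucc_mk]
      exact congrArg (fun t => op t (x i.succ)) (hx _ _)
    · apply hdeg _ (p - 1) (by omega)
      simp only
      rw [if_neg (show ¬(p - 1 < (i : ℕ) + 1) by omega),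
        if_neg (show ¬(p - 1 + 1 < (i : ℕ) + 1) by omega), Fin.succ_mk, Fin.succ_mk]
      exact (xeq _ ⟨p, by omega⟩ (show p - 1 + 1 = p by omega)).trans
        ((hx _ _).trans (xeq ⟨p + 1, by omega⟩ _ (show p + 1 = p - 1 + 1 + 1 by omega)))
  have key : ∀ (m : ℕ) (v : A), ((-1 : ℤ) ^ m) • v + ((-1 : ℤ) ^ (m + 1)) • v = 0 := by
    intro m v
    rw [pow_succ, mul_neg_one, neg_smul, add_neg_cancel]
  unfold qdelta
  rw [← Finset.sum_add_distrib]
  rcases Nat.eq_zero_or_pos p with hp0 | hppos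
  · -- p = 0 : every summand vanishes
    apply Finset.sum_eq_zero
    intro i _
    by_cases hi : (i : ℕ) = 0
    · have hgs : (x ∘ (Fin.succ i).succAbove)
          = (fun k : Fin n => if (k : ℕ) < (i : ℕ) + 1
              then op (x k.castSucc) (x i.succ) else x k.succ) := by
        rw [hAarg i]
        funext k
        by_cases hk : (k : ℕ) < (i : ℕ) + 1
        · rw [if_pos hk, if_pos hk]
          have e1 : x i.succ = x k.castSucc := by
            refine (xeq _ ⟨p + 1, by omega⟩ (show (i : ℕ) + 1 = p + 1 by omega)).trans
              (((hx (by omega) (by omega)).symm).trans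
                (xeq ⟨p, by omega⟩ _ (show p = (k : ℕ) by omega)))
          rw [e1, hI]
        · rw [if_neg hk, if_neg hk]
      rw [hgs]
      exact key _ _
    · rw [hAarg i, hA0 i (by omega) (by omega), hB0 i (by omega) (by omega),
        smul_zero, smul_zero, add_zero]
  · -- p = q + 1 : the two summands at indices q and q+1 cancel, the rest vanish
    obtain ⟨q, hq⟩ : ∃ q, p = q + 1 := ⟨p - 1, by omega⟩
    have hq1 : q + 1 < n := by omega
    have hq0 : q < n := by omega
    rw [← Finset.sum_subset (Finset.subset_univ {(⟨q, hq0⟩ : Fin n), ⟨q + 1, hq1⟩})]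
    · rw [Finset.sum_pair (by exact Fin.ne_of_val_ne (show q ≠ q + 1 by omega))]
      have cA : (x ∘ (Fin.succ (⟨q, hq0⟩ : Fin n)).succAbove)
          = (x ∘ (Fin.succ (⟨q + 1, hq1⟩ : Fin n)).succAbove) := by
        rw [hAarg, hAarg]
        funext k
        have hi0 : ((⟨q, hq0⟩ : Fin n) : ℕ) = q := rfl
        have hi1 : ((⟨q + 1, hq1⟩ : Fin n) : ℕ) = q + 1 := rfl
        rw [hi0, hi1]
        by_cases hk1 : (k : ℕ) < q + 1
        · rw [if_pos hk1, if_pos (by omega)]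
        · by_cases hk2 : (k : ℕ) < q + 2
          · rw [if_neg hk1, if_pos hk2]
            exact (xeq _ ⟨p + 1, by omega⟩ (show (k : ℕ) + 1 = p + 1 by omega)).trans
              (((hx (by omega) (by omega)).symm).trans
                (xeq ⟨p, by omega⟩ _ (show p = (k : ℕ) by omega)))
          · rw [if_neg hk1, if_neg hk2]
      have cB : (fun k : Fin n => if (k : ℕ) < ((⟨q, hq0⟩ : Fin n) : ℕ) + 1
            then op (x k.castSucc) (x (⟨q, hq0⟩ : Fin n).succ) else x k.succ)
          = (fun k : Fin n => if (k : ℕ) < ((⟨q + 1, hq1⟩ : Fin n) : ℕ) + 1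
            then op (x k.castSucc) (x (⟨q + 1, hq1⟩ : Fin n).succ) else x k.succ) := by
        funext k
        have hs : x (⟨q, hq0⟩ : Fin n).succ = x (⟨q + 1, hq1⟩ : Fin n).succ := by
          exact (xeq _ ⟨p, by omega⟩ (show q + 1 = p by omega)).trans
            ((hx (by omega) (by omega)).trans
              (xeq ⟨p + 1, by omega⟩ _ (show p + 1 = q + 1 + 1 by omega)))
        have hi0 : ((⟨q, hq0⟩ : Fin n) : ℕ) = q := rfl
        have hi1 : ((⟨q + 1, hq1⟩ : Fin n) : ℕ) = q + 1 := rfl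
        rw [hi0, hi1, hs]
        by_cases hk1 : (k : ℕ) < q + 1
        · rw [if_pos hk1, if_pos (by omega)]
        · by_cases hk2 : (k : ℕ) < q + 2
          · rw [if_neg hk1, if_pos hk2]
            have e1 : x k.castSucc = x (⟨q + 1, hq1⟩ : Fin n).succ := by
              exact (xeq _ ⟨p, by omega⟩ (show (k : ℕ) = p by omega)).trans
                ((hx (by omega) (by omega)).trans
                  (xeq ⟨p + 1, by omega⟩ _ (show p + 1 = q + 1 + 1 by omega)))
            rw [e1, hI]
            exact xeq _ _ (show (k : ℕ) + 1 = q + 1 + 1 by omega)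
          · rw [if_neg hk1, if_neg hk2]
      rw [cA, cB]
      have hi0 : ((⟨q, hq0⟩ : Fin n) : ℕ) = q := rfl
      have hi1 : ((⟨q + 1, hq1⟩ : Fin n) : ℕ) = q + 1 := rfl
      rw [hi0, hi1]
      rw [add_add_add_comm]
      rw [key, key, add_zero]
    · intro i _ hi
      simp only [Finset.mem_insert, Finset.mem_singleton] at hi
      push_neg at hi
      obtain ⟨h1, h2⟩ := hi
      have h1' : (i : ℕ) ≠ q := fun h => h1 (Fin.ext h)
      have h2' : (i : ℕ) ≠ q + 1 := fun h => h2 (Fin.ext h)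
      rw [hAarg i, hA0 i (by omega) (by omega), hB0 i (by omega) (by omega),
        smul_zero, smul_zero, add_zero]
end

section
/- Let R be a commutative ring, let T be a unit of R, let n ≥ 2, and let A be the n×n matrix over R with entries A_{i,i+1} = T for 1 ≤ i ≤ n−1, A_{n,1} = 1, A_{n,j} = 1−T for 2 ≤ j ≤ n, and all other entries 0. If e_n · A^{kn} = e_n for some natural number k (where e_i denotes the i-th standard basis row vector and vectors multiply matrices on the right), then e_j · A^{kn} = e_j for every j = 1, 2, …, n; equivalently A^{kn} is the identity matrix. -/
/-- The torus-braid monodromy matrix `A(T)`: the `n × n` matrix (rows and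
columns indexed by `Fin n`, i.e. `0,…,n−1` instead of `1,…,n`) with
`A_{i,i+1} = T` for `i < n−1`, last row `(1, 1−T, …, 1−T)`, and all other
entries `0`. -/
def torusMatrix (R : Type*) [CommRing R] (n : ℕ) (T : R) :
    Matrix (Fin n) (Fin n) R :=
  Matrix.of fun i j =>
    if (i : ℕ) = n - 1 then (if (j : ℕ) = 0 then 1 else 1 - T)
    else if (j : ℕ) = (i : ℕ) + 1 then T else 0

/-! The power `M = A^{kn}` commutes with `A`, and `A` is invertible since `det A = (-T)^{n-1}`.
Hence if `v A` is fixed by `M`, then `(v M) A = (v A) M = v A`, so `v` is fixed too. As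
`e_j A = T e_{j+1}`, descending induction from the fixed vector `e_n` fixes every `e_j`. -/

namespace Matrix

variable {n R : Type*} [Fintype n] [DecidableEq n] [CommRing R]

theorem vecMul_eq_self_of_vecMul_vecMul_eq {A M : Matrix n n R} (hA : IsUnit A.det)
    (hAM : Commute A M) {v : n → R} (h : v ᵥ* A ᵥ* M = v ᵥ* A) : v ᵥ* M = v :=
  vecMul_injective_of_isUnit ((isUnit_iff_isUnit_det A).2 hA) <| by
    simp only [vecMul_vecMul] at h ⊢
    rwa [← hAM.eq]

end Matrix

open Matrix

section

variable {R : Type*} [CommRing R] (T : R)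
theorem det_torusMatrix (n : ℕ) : (torusMatrix R n T).det = (-T) ^ (n - 1) := by
  rcases n with _ | m
  · simp
  have hsub : (torusMatrix R (m + 1) T).submatrix (Fin.last m).succAbove Fin.succ =
      diagonal fun _ => T := by
    ext i j
    simp only [submatrix_apply, Fin.succAbove_last, torusMatrix, of_apply, Fin.val_castSucc,
      Fin.val_succ, diagonal_apply, add_tsub_cancel_right, if_neg i.is_lt.ne, add_left_inj,
      Fin.val_inj]
    exact if_congr eq_comm rfl rfl
  have hcorner : torusMatrix R (m + 1) T (Fin.last m) 0 = 1 := by simp [torusMatrix]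
  rw [det_succ_column_zero, Finset.sum_eq_single (Fin.last m)]
  · rw [hsub, hcorner, det_diagonal, Finset.prod_const, Finset.card_fin, Fin.val_last]
    rw [add_tsub_cancel_right, neg_pow]; ring
  · intro i _ hi
    have : (i : ℕ) ≠ m := fun h => hi (Fin.ext h)
    simp [torusMatrix, this]
  · simp

theorem single_castSucc_vecMul_torusMatrix {m : ℕ} (i : Fin m) :
    Pi.single i.castSucc 1 ᵥ* torusMatrix R (m + 1) T = T • Pi.single i.succ 1 := by
  ext j
  simp only [single_one_vecMul, row_apply, torusMatrix, of_apply, Fin.val_castSucc,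
    add_tsub_cancel_right, if_neg i.is_lt.ne, Pi.smul_apply, Pi.single_apply, smul_eq_mul,
    mul_ite, mul_one, mul_zero, Fin.ext_iff, Fin.val_succ]

end

/-- Let `T` be a unit of a commutative ring `R`, `n ≥ 2`, and `A = A(T)` the
torus-braid monodromy matrix.  If `e_n · A^{kn} = e_n` (where `e_i` are the
standard basis row vectors, acting by right multiplication), then
`e_j · A^{kn} = e_j` for every `j`, i.e. `A^{kn}` is the identity matrix. -/
theorem torusMatrix_pow_eq_one_of_last_row {R : Type*} [CommRing R]
    (T : R) (hT : IsUnit T) (n : ℕ) (hn : 2 ≤ n) (k : ℕ)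
    (h : Matrix.vecMul (Pi.single (⟨n - 1, by omega⟩ : Fin n) (1 : R))
        (torusMatrix R n T ^ (k * n))
      = Pi.single (⟨n - 1, by omega⟩ : Fin n) (1 : R)) :
    (∀ j : Fin n, Matrix.vecMul (Pi.single j (1 : R)) (torusMatrix R n T ^ (k * n))
        = Pi.single j (1 : R)) ∧
      torusMatrix R n T ^ (k * n) = 1 := by
  obtain ⟨m, rfl⟩ : ∃ m, n = m + 1 := ⟨n - 1, by omega⟩
  set A := torusMatrix R (m + 1) T
  have hA : IsUnit A.det := by rw [det_torusMatrix]; exact hT.neg.pow _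
  have hrows : ∀ j : Fin (m + 1), Pi.single j 1 ᵥ* A ^ (k * (m + 1)) = Pi.single j 1 := by
    refine Fin.reverseInduction (by simpa [Fin.last] using h) fun i hi => ?_
    refine vecMul_eq_self_of_vecMul_vecMul_eq hA (Commute.self_pow A _) ?_
    rw [single_castSucc_vecMul_torusMatrix, smul_vecMul, hi]
  refine ⟨hrows, ?_⟩
  ext i j
  simpa [one_eq_pi_single] using congrFun (hrows i) j
end

section
/- Let A be any abelian group and let R₃ be the dihedral quandle of order 3. Then the second quandle cohomology group H²_Q(R₃, A) is trivial: every quandle 2-cocycle φ : R₃ × R₃ → A is a 2-coboundary, i.e., there exists g : R₃ → A with φ(x,y) = g(x) − g(x*y) for all x,y. -/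
/-- `H²_Q(R₃, A) = 0` for every abelian group `A`: every quandle 2-cocycle of
the dihedral quandle `R₃` (`ZMod 3` with `x ∗ y = 2y − x`) with coefficients
in `A` is a 2-coboundary. -/
theorem H2_R3_trivial {A : Type*} [AddCommGroup A] (φ : ZMod 3 → ZMod 3 → A)
    (hdiag : ∀ x : ZMod 3, φ x x = 0)
    (hcocy : ∀ x₀ x₁ x₂ : ZMod 3,
      φ x₀ x₂ - φ x₀ x₁ - φ (2 * x₁ - x₀) x₂
        + φ (2 * x₂ - x₀) (2 * x₂ - x₁) = 0) :
    ∃ g : ZMod 3 → A, ∀ x y : ZMod 3, φ x y = g x - g (2 * y - x) := by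
  have h1 := hcocy 0 1 2
  have h2 := hcocy 0 2 1
  have h3 := hcocy 1 0 2
  have h4 := hcocy 2 0 1
  rw [show (2*1-0 : ZMod 3) = 2 from by decide, show (2*2-0 : ZMod 3) = 1 from by decide,
    show (2*2-1 : ZMod 3) = 0 from by decide, hdiag, sub_zero] at h1
  rw [show (2*2-0 : ZMod 3) = 1 from by decide, show (2*1-0 : ZMod 3) = 2 from by decide,
    show (2*1-2 : ZMod 3) = 0 from by decide, hdiag, sub_zero] at h2
  rw [show (2*0-1 : ZMod 3) = 2 from by decide, show (2*2-1 : ZMod 3) = 0 from by decide,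
    show (2*2-0 : ZMod 3) = 1 from by decide, hdiag, sub_zero] at h3
  rw [show (2*0-2 : ZMod 3) = 1 from by decide, show (2*1-2 : ZMod 3) = 0 from by decide,
    show (2*1-0 : ZMod 3) = 2 from by decide, hdiag, sub_zero] at h4
  -- h1 : φ 0 2 - φ 0 1 + φ 1 0 = 0
  -- h2 : φ 0 1 - φ 0 2 + φ 2 0 = 0
  -- h3 : φ 1 2 - φ 1 0 + φ 0 1 = 0
  -- h4 : φ 2 1 - φ 2 0 + φ 0 2 = 0
  have e1 : φ 1 0 = φ 0 1 - φ 0 2 := sub_eq_zero.mp (by rw [← h1]; abel)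
  have e2 : φ 2 0 = φ 0 2 - φ 0 1 := sub_eq_zero.mp (by rw [← h2]; abel)
  rw [e1] at h3
  rw [e2] at h4
  have e3 : φ 1 2 = -φ 0 2 := sub_eq_zero.mp (by rw [← h3]; abel)
  have e4 : φ 2 1 = -φ 0 1 := sub_eq_zero.mp (by rw [← h4]; abel)
  refine ⟨fun x => if x = 0 then 0 else if x = 1 then -φ 0 2 else -φ 0 1, fun x y => ?_⟩
  have tri : ∀ z : ZMod 3, z = 0 ∨ z = 1 ∨ z = 2 := by decide
  rcases tri x with rfl | rfl | rfl <;> rcases tri y with rfl | rfl | rfl <;>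
    simp only [show (2*0-0 : ZMod 3) = 0 from by decide,
      show (2*1-0 : ZMod 3) = 2 from by decide,
      show (2*2-0 : ZMod 3) = 1 from by decide,
      show (2*0-1 : ZMod 3) = 2 from by decide,
      show (2*1-1 : ZMod 3) = 1 from by decide,
      show (2*2-1 : ZMod 3) = 0 from by decide,
      show (2*0-2 : ZMod 3) = 1 from by decide,
      show (2*1-2 : ZMod 3) = 0 from by decide,
      show (2*2-2 : ZMod 3) = 2 from by decide] <;>
    simp [hdiag, e1, e2, e3, e4, show (2:ZMod 3) ≠ 0 from by decide,
      show (2:ZMod 3) ≠ 1 from by decide, show (1:ZMod 3) ≠ 0 from by decide] <;>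
    abel
end

section
/- Let A be any abelian group and let R₅ be the dihedral quandle of order 5. Then the second quandle cohomology group H²_Q(R₅, A) is trivial: every quandle 2-cocycle φ : R₅ × R₅ → A is a 2-coboundary. -/
/-- `H²_Q(R₅, A) = 0` for every abelian group `A`: every quandle 2-cocycle of
the dihedral quandle `R₅` (`ZMod 5` with `x ∗ y = 2y − x`) with coefficients
in `A` is a 2-coboundary. -/
theorem H2_R5_trivial {A : Type*} [AddCommGroup A] (φ : ZMod 5 → ZMod 5 → A)
    (hdiag : ∀ x : ZMod 5, φ x x = 0)
    (hcocy : ∀ x₀ x₁ x₂ : ZMod 5,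
      φ x₀ x₂ - φ x₀ x₁ - φ (2 * x₁ - x₀) x₂
        + φ (2 * x₂ - x₀) (2 * x₂ - x₁) = 0) :
    ∃ g : ZMod 5 → A, ∀ x y : ZMod 5, φ x y = g x - g (2 * y - x) := by
  refine ⟨fun x => -φ 4 (3 * x + 2), fun x y => ?_⟩
  fin_cases x <;> fin_cases y
  · show φ 0 0 = -φ 4 2 - -φ 4 2
    linear_combination (norm := abel1) hdiag 0
  · show φ 0 1 = -φ 4 2 - -φ 4 3
    have h1 : φ 1 3 - φ 1 0 - φ 4 3 + φ 0 1 = 0 := hcocy 1 0 3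
    have h2 : φ 1 0 - φ 1 3 - φ 0 0 + φ 4 2 = 0 := hcocy 1 3 0
    linear_combination (norm := abel1) hdiag 0 + h1 + h2
  · show φ 0 2 = -φ 4 2 - -φ 4 4
    have h1 : φ 0 2 - φ 0 0 - φ 0 2 + φ 4 4 = 0 := hcocy 0 0 2
    have h2 : φ 0 2 - φ 0 1 - φ 2 2 + φ 4 3 = 0 := hcocy 0 1 2
    have h3 : φ 1 3 - φ 1 0 - φ 4 3 + φ 0 1 = 0 := hcocy 1 0 3
    have h4 : φ 1 0 - φ 1 3 - φ 0 0 + φ 4 2 = 0 := hcocy 1 3 0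
    linear_combination (norm := abel1) hdiag 2 - h1 + h2 + h3 + h4
  · show φ 0 3 = -φ 4 2 - -φ 4 0
    have h1 : φ 0 2 - φ 0 1 - φ 2 2 + φ 4 3 = 0 := hcocy 0 1 2
    have h2 : φ 0 0 - φ 0 2 - φ 4 0 + φ 0 3 = 0 := hcocy 0 2 0
    have h3 : φ 1 3 - φ 1 0 - φ 4 3 + φ 0 1 = 0 := hcocy 1 0 3
    have h4 : φ 1 0 - φ 1 3 - φ 0 0 + φ 4 2 = 0 := hcocy 1 3 0
    linear_combination (norm := abel1) hdiag 2 + h1 + h2 + h3 + h4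
  · show φ 0 4 = -φ 4 2 - -φ 4 1
    have h1 : φ 0 0 - φ 0 1 - φ 2 0 + φ 0 4 = 0 := hcocy 0 1 0
    have h2 : φ 0 2 - φ 0 1 - φ 2 2 + φ 4 3 = 0 := hcocy 0 1 2
    have h3 : φ 0 1 - φ 0 2 - φ 4 1 + φ 2 0 = 0 := hcocy 0 2 1
    have h4 : φ 1 3 - φ 1 0 - φ 4 3 + φ 0 1 = 0 := hcocy 1 0 3
    have h5 : φ 1 0 - φ 1 3 - φ 0 0 + φ 4 2 = 0 := hcocy 1 3 0
    linear_combination (norm := abel1) hdiag 2 + h1 + h2 + h3 + h4 + h5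
  · show φ 1 0 = -φ 4 0 - -φ 4 4
    have h1 : φ 0 2 - φ 0 0 - φ 0 2 + φ 4 4 = 0 := hcocy 0 0 2
    have h2 : φ 0 0 - φ 0 2 - φ 4 0 + φ 0 3 = 0 := hcocy 0 2 0
    have h3 : φ 0 0 - φ 0 3 - φ 1 0 + φ 0 2 = 0 := hcocy 0 3 0
    linear_combination (norm := abel1) hdiag 0 - h1 - h2 - h3
  · show φ 1 1 = -φ 4 0 - -φ 4 0
    have h1 : φ 0 3 - φ 0 0 - φ 0 3 + φ 1 1 = 0 := hcocy 0 0 3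
    linear_combination (norm := abel1) hdiag 0 + h1
  · show φ 1 2 = -φ 4 0 - -φ 4 1
    have h1 : φ 0 0 - φ 0 2 - φ 4 0 + φ 0 3 = 0 := hcocy 0 2 0
    have h2 : φ 0 2 - φ 0 3 - φ 1 2 + φ 4 1 = 0 := hcocy 0 3 2
    linear_combination (norm := abel1) hdiag 0 - h1 - h2
  · show φ 1 3 = -φ 4 0 - -φ 4 2
    have h1 : φ 0 0 - φ 0 2 - φ 4 0 + φ 0 3 = 0 := hcocy 0 2 0
    have h2 : φ 0 0 - φ 0 3 - φ 1 0 + φ 0 2 = 0 := hcocy 0 3 0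
    have h3 : φ 1 0 - φ 1 3 - φ 0 0 + φ 4 2 = 0 := hcocy 1 3 0
    linear_combination (norm := abel1) hdiag 0 - h1 - h2 - h3
  · show φ 1 4 = -φ 4 0 - -φ 4 3
    have h1 : φ 0 0 - φ 0 2 - φ 4 0 + φ 0 3 = 0 := hcocy 0 2 0
    have h2 : φ 0 3 - φ 0 2 - φ 4 3 + φ 1 4 = 0 := hcocy 0 2 3
    linear_combination (norm := abel1) hdiag 0 - h1 + h2
  · show φ 2 0 = -φ 4 3 - -φ 4 1
    have h1 : φ 0 2 - φ 0 1 - φ 2 2 + φ 4 3 = 0 := hcocy 0 1 2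
    have h2 : φ 0 1 - φ 0 2 - φ 4 1 + φ 2 0 = 0 := hcocy 0 2 1
    linear_combination (norm := abel1) hdiag 2 + h1 + h2
  · show φ 2 1 = -φ 4 3 - -φ 4 2
    have h1 : φ 0 3 - φ 0 2 - φ 4 3 + φ 1 4 = 0 := hcocy 0 2 3
    have h2 : φ 0 0 - φ 0 3 - φ 1 0 + φ 0 2 = 0 := hcocy 0 3 0
    have h3 : φ 1 2 - φ 1 0 - φ 4 2 + φ 3 4 = 0 := hcocy 1 0 2
    have h4 : φ 1 4 - φ 1 2 - φ 3 4 + φ 2 1 = 0 := hcocy 1 2 4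
    linear_combination (norm := abel1) hdiag 0 - h1 - h2 + h3 + h4
  · show φ 2 2 = -φ 4 3 - -φ 4 3
    linear_combination (norm := abel1) hdiag 2
  · show φ 2 3 = -φ 4 3 - -φ 4 4
    have h1 : φ 0 2 - φ 0 0 - φ 0 2 + φ 4 4 = 0 := hcocy 0 0 2
    have h2 : φ 0 2 - φ 0 1 - φ 2 2 + φ 4 3 = 0 := hcocy 0 1 2
    have h3 : φ 0 3 - φ 0 1 - φ 2 3 + φ 1 0 = 0 := hcocy 0 1 3
    have h4 : φ 0 0 - φ 0 3 - φ 1 0 + φ 0 2 = 0 := hcocy 0 3 0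
    linear_combination (norm := abel1) hdiag 2 - h1 + h2 - h3 - h4
  · show φ 2 4 = -φ 4 3 - -φ 4 0
    have h1 : φ 0 3 - φ 0 0 - φ 0 3 + φ 1 1 = 0 := hcocy 0 0 3
    have h2 : φ 0 2 - φ 0 1 - φ 2 2 + φ 4 3 = 0 := hcocy 0 1 2
    have h3 : φ 0 0 - φ 0 2 - φ 4 0 + φ 0 3 = 0 := hcocy 0 2 0
    have h4 : φ 0 1 - φ 0 3 - φ 1 1 + φ 2 4 = 0 := hcocy 0 3 1
    linear_combination (norm := abel1) hdiag 2 + h1 + h2 + h3 + h4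
  · show φ 3 0 = -φ 4 1 - -φ 4 3
    have h1 : φ 0 0 - φ 0 1 - φ 2 0 + φ 0 4 = 0 := hcocy 0 1 0
    have h2 : φ 0 1 - φ 0 2 - φ 4 1 + φ 2 0 = 0 := hcocy 0 2 1
    have h3 : φ 0 3 - φ 0 2 - φ 4 3 + φ 1 4 = 0 := hcocy 0 2 3
    have h4 : φ 0 4 - φ 0 3 - φ 1 4 + φ 3 0 = 0 := hcocy 0 3 4
    linear_combination (norm := abel1) hdiag 0 - h1 - h2 + h3 + h4
  · show φ 3 1 = -φ 4 1 - -φ 4 4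
    have h1 : φ 0 0 - φ 0 1 - φ 2 0 + φ 0 4 = 0 := hcocy 0 1 0
    have h2 : φ 0 1 - φ 0 2 - φ 4 1 + φ 2 0 = 0 := hcocy 0 2 1
    have h3 : φ 0 4 - φ 0 2 - φ 4 4 + φ 3 1 = 0 := hcocy 0 2 4
    linear_combination (norm := abel1) hdiag 0 - h1 - h2 + h3
  · show φ 3 2 = -φ 4 1 - -φ 4 0
    have h1 : φ 0 3 - φ 0 0 - φ 0 3 + φ 1 1 = 0 := hcocy 0 0 3
    have h2 : φ 0 0 - φ 0 1 - φ 2 0 + φ 0 4 = 0 := hcocy 0 1 0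
    have h3 : φ 0 4 - φ 0 1 - φ 2 4 + φ 3 2 = 0 := hcocy 0 1 4
    have h4 : φ 0 0 - φ 0 2 - φ 4 0 + φ 0 3 = 0 := hcocy 0 2 0
    have h5 : φ 0 1 - φ 0 2 - φ 4 1 + φ 2 0 = 0 := hcocy 0 2 1
    have h6 : φ 0 1 - φ 0 3 - φ 1 1 + φ 2 4 = 0 := hcocy 0 3 1
    linear_combination (norm := abel1) hdiag 0 + h1 - h2 + h3 + h4 - h5 + h6
  · show φ 3 3 = -φ 4 1 - -φ 4 1
    have h1 : φ 0 4 - φ 0 0 - φ 0 4 + φ 3 3 = 0 := hcocy 0 0 4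
    linear_combination (norm := abel1) hdiag 0 + h1
  · show φ 3 4 = -φ 4 1 - -φ 4 2
    have h1 : φ 0 0 - φ 0 3 - φ 1 0 + φ 0 2 = 0 := hcocy 0 3 0
    have h2 : φ 0 2 - φ 0 3 - φ 1 2 + φ 4 1 = 0 := hcocy 0 3 2
    have h3 : φ 1 2 - φ 1 0 - φ 4 2 + φ 3 4 = 0 := hcocy 1 0 2
    linear_combination (norm := abel1) hdiag 0 - h1 + h2 + h3
  · show φ 4 0 = -φ 4 4 - -φ 4 0
    have h1 : φ 0 2 - φ 0 0 - φ 0 2 + φ 4 4 = 0 := hcocy 0 0 2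
    linear_combination (norm := abel1) hdiag 0 + h1
  · show φ 4 1 = -φ 4 4 - -φ 4 1
    have h1 : φ 0 2 - φ 0 0 - φ 0 2 + φ 4 4 = 0 := hcocy 0 0 2
    linear_combination (norm := abel1) hdiag 0 + h1
  · show φ 4 2 = -φ 4 4 - -φ 4 2
    have h1 : φ 0 2 - φ 0 0 - φ 0 2 + φ 4 4 = 0 := hcocy 0 0 2
    linear_combination (norm := abel1) hdiag 0 + h1
  · show φ 4 3 = -φ 4 4 - -φ 4 3
    have h1 : φ 0 2 - φ 0 0 - φ 0 2 + φ 4 4 = 0 := hcocy 0 0 2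
    linear_combination (norm := abel1) hdiag 0 + h1
  · show φ 4 4 = -φ 4 4 - -φ 4 4
    have h1 : φ 0 2 - φ 0 0 - φ 0 2 + φ 4 4 = 0 := hcocy 0 0 2
    linear_combination (norm := abel1) hdiag 0 + h1
end

section
/- Let F = GaloisField 2 2 and let T ∈ F satisfy T² + T + 1 = 0, and let S₄ denote the quandle on F with operation x*y = T·x + (1+T)·y. Then the second quandle cohomology group H²_Q(S₄, ZMod 2) is isomorphic as an abelian group to ZMod 2 (i.e., the quotient of the group of quandle 2-cocycles with ZMod 2 coefficients by the subgroup of 2-coboundaries has order 2). -/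
/-- The abelian group of quandle 2-cocycles of `(X, op)` with coefficients in
`A`: functions `φ : X → X → A` with `φ(x,x) = 0` and
`φ(x₀,x₂) − φ(x₀,x₁) − φ(x₀∗x₁, x₂) + φ(x₀∗x₂, x₁∗x₂) = 0`. -/
def quandleCocycle2 {X : Type*} (op : X → X → X) (A : Type*) [AddCommGroup A] :
    AddSubgroup (X → X → A) where
  carrier := {φ | (∀ x, φ x x = 0) ∧ ∀ x₀ x₁ x₂,
    φ x₀ x₂ - φ x₀ x₁ - φ (op x₀ x₁) x₂ + φ (op x₀ x₂) (op x₁ x₂) = 0}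
  zero_mem' := ⟨fun _ => rfl, fun _ _ _ => by simp⟩
  add_mem' := by
    rintro φ ψ ⟨hφ1, hφ2⟩ ⟨hψ1, hψ2⟩
    refine ⟨fun x => ?_, fun x₀ x₁ x₂ => ?_⟩
    · show φ x x + ψ x x = 0
      rw [hφ1 x, hψ1 x, add_zero]
    · show (φ x₀ x₂ + ψ x₀ x₂) - (φ x₀ x₁ + ψ x₀ x₁)
          - (φ (op x₀ x₁) x₂ + ψ (op x₀ x₁) x₂)
          + (φ (op x₀ x₂) (op x₁ x₂) + ψ (op x₀ x₂) (op x₁ x₂)) = 0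
      calc (φ x₀ x₂ + ψ x₀ x₂) - (φ x₀ x₁ + ψ x₀ x₁)
            - (φ (op x₀ x₁) x₂ + ψ (op x₀ x₁) x₂)
            + (φ (op x₀ x₂) (op x₁ x₂) + ψ (op x₀ x₂) (op x₁ x₂))
          = (φ x₀ x₂ - φ x₀ x₁ - φ (op x₀ x₁) x₂ + φ (op x₀ x₂) (op x₁ x₂))
            + (ψ x₀ x₂ - ψ x₀ x₁ - ψ (op x₀ x₁) x₂
                + ψ (op x₀ x₂) (op x₁ x₂)) := by abel
        _ = 0 := by rw [hφ2 x₀ x₁ x₂, hψ2 x₀ x₁ x₂, add_zero]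
  neg_mem' := by
    rintro φ ⟨h1, h2⟩
    refine ⟨fun x => ?_, fun x₀ x₁ x₂ => ?_⟩
    · show -φ x x = 0
      rw [h1 x, neg_zero]
    · show -φ x₀ x₂ - -φ x₀ x₁ - -φ (op x₀ x₁) x₂ + -φ (op x₀ x₂) (op x₁ x₂) = 0
      calc -φ x₀ x₂ - -φ x₀ x₁ - -φ (op x₀ x₁) x₂ + -φ (op x₀ x₂) (op x₁ x₂)
          = -(φ x₀ x₂ - φ x₀ x₁ - φ (op x₀ x₁) x₂
              + φ (op x₀ x₂) (op x₁ x₂)) := by abel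
        _ = 0 := by rw [h2 x₀ x₁ x₂, neg_zero]

/-- The 2-coboundary homomorphism `g ↦ ((x,y) ↦ g(x) − g(x∗y))`. -/
def quandleCoboundary2 {X : Type*} (op : X → X → X) (A : Type*)
    [AddCommGroup A] : (X → A) →+ (X → X → A) where
  toFun g := fun x y => g x - g (op x y)
  map_zero' := by funext x y; simp
  map_add' g h := by funext x y; simp only [Pi.add_apply]; abel

/-- `H²_Q(S₄, ℤ₂) ≅ ℤ₂`: for the quandle `S₄` (the field `GaloisField 2 2`
with `x ∗ y = T·x + (1+T)·y`, where `T² + T + 1 = 0`), the quotient of the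
group of quandle 2-cocycles with `ZMod 2` coefficients by the subgroup of
2-coboundaries is isomorphic to `ZMod 2`. -/
theorem H2_S4_ZMod2 (T : GaloisField 2 2) (hT : T ^ 2 + T + 1 = 0) :
    Nonempty
      ((quandleCocycle2 (fun x y => T * x + (1 + T) * y) (ZMod 2) ⧸
        ((quandleCoboundary2 (fun x y => T * x + (1 + T) * y) (ZMod 2)).range.addSubgroupOf
          (quandleCocycle2 (fun x y => T * x + (1 + T) * y) (ZMod 2))))
      ≃+ ZMod 2) := by
  classical
  have h2F : (2 : GaloisField 2 2) = 0 := by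
    exact_mod_cast CharP.cast_eq_zero (GaloisField 2 2) 2
  have h2Z : (2 : ZMod 2) = 0 := by decide
  have n10 : (1 : GaloisField 2 2) ≠ 0 := one_ne_zero
  have nT0 : T ≠ 0 := by intro h; rw [h] at hT; simp at hT
  have nT1 : T ≠ 1 := by intro h; rw [h] at hT; exact n10 (by linear_combination hT - h2F)
  have nU0 : 1 + T ≠ 0 := by intro h; exact n10 (by linear_combination hT - T * h)
  have nU1 : 1 + T ≠ 1 := by intro h; exact nT0 (by linear_combination h)
  have nUT : 1 + T ≠ T := by intro h; exact n10 (by linear_combination h)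
  have n01 : (0 : GaloisField 2 2) ≠ 1 := Ne.symm n10
  have n0T : (0 : GaloisField 2 2) ≠ T := Ne.symm nT0
  have n0U : (0 : GaloisField 2 2) ≠ 1 + T := Ne.symm nU0
  have n1T : (1 : GaloisField 2 2) ≠ T := Ne.symm nT1
  have n1U : (1 : GaloisField 2 2) ≠ 1 + T := Ne.symm nU1
  have nTU : T ≠ 1 + T := Ne.symm nUT
  have hop_0_0 : T * 0 + (1 + T) * 0 = 0 := by ring
  have hop_0_1 : T * 0 + (1 + T) * 1 = (1 + T) := by ring
  have hop_0_2 : T * 0 + (1 + T) * T = 1 := by linear_combination hT + (-1) * h2F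
  have hop_0_3 : T * 0 + (1 + T) * (1 + T) = T := by linear_combination hT
  have hop_1_0 : T * 1 + (1 + T) * 0 = T := by ring
  have hop_1_1 : T * 1 + (1 + T) * 1 = 1 := by linear_combination T * h2F
  have hop_1_2 : T * 1 + (1 + T) * T = (1 + T) := by linear_combination hT + (-1) * h2F
  have hop_1_3 : T * 1 + (1 + T) * (1 + T) = 0 := by linear_combination hT + T * h2F
  have hop_2_0 : T * T + (1 + T) * 0 = (1 + T) := by linear_combination hT + ((-1) + (-1) * T) * h2F
  have hop_2_1 : T * T + (1 + T) * 1 = 0 := by linear_combination hT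
  have hop_2_2 : T * T + (1 + T) * T = T := by linear_combination (2) * hT + ((-1) + (-1) * T) * h2F
  have hop_2_3 : T * T + (1 + T) * (1 + T) = 1 := by linear_combination (2) * hT + (-1) * h2F
  have hop_3_0 : T * (1 + T) + (1 + T) * 0 = 1 := by linear_combination hT + (-1) * h2F
  have hop_3_1 : T * (1 + T) + (1 + T) * 1 = T := by linear_combination hT
  have hop_3_2 : T * (1 + T) + (1 + T) * T = 0 := by linear_combination (2) * hT + (-1) * h2F
  have hop_3_3 : T * (1 + T) + (1 + T) * (1 + T) = (1 + T) := by linear_combination (2) * hT + (-1) * h2F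
  have hmul_0 : T * 0 = 0 := by ring
  have hmul_1 : T * 1 = T := by ring
  have hmul_2 : T * T = (1 + T) := by linear_combination hT + ((-1) + (-1) * T) * h2F
  have hmul_3 : T * (1 + T) = 1 := by linear_combination hT + (-1) * h2F
  haveI : Fintype (GaloisField 2 2) := Fintype.ofFinite _
  have hcard4 : Fintype.card (GaloisField 2 2) = 4 := by
    have h := GaloisField.card 2 2 (by norm_num)
    rw [Nat.card_eq_fintype_card] at h
    norm_num at h
    exact h
  have hcover : ∀ x : GaloisField 2 2, x = 0 ∨ x = 1 ∨ x = T ∨ x = 1 + T := by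
    intro x
    have hsetcard : ({0, 1, T, 1 + T} : Finset (GaloisField 2 2)).card = 4 := by
      rw [Finset.card_insert_of_notMem (by simp [n01, n0T, n0U]),
          Finset.card_insert_of_notMem (by simp [n1T, n1U]),
          Finset.card_insert_of_notMem (by simp [nTU]),
          Finset.card_singleton]
    have huniv := Finset.eq_univ_of_card _ (hsetcard.trans hcard4.symm)
    have hx : x ∈ ({0, 1, T, 1 + T} : Finset (GaloisField 2 2)) := by
      rw [huniv]; exact Finset.mem_univ x
    simpa using hx
  set f : quandleCocycle2 (fun x y => T * x + (1 + T) * y) (ZMod 2) →+ ZMod 2 :=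
    (AddMonoidHom.mk' (fun φ : GaloisField 2 2 → GaloisField 2 2 → ZMod 2 => φ 0 1 + φ (1 + T) T)
      (fun φ ψ => by simp only [Pi.add_apply]; ring)).comp
      (quandleCocycle2 (fun x y => T * x + (1 + T) * y) (ZMod 2)).subtype with hfdef
  have hker : ((quandleCoboundary2 (fun x y => T * x + (1 + T) * y) (ZMod 2)).range.addSubgroupOf
      (quandleCocycle2 (fun x y => T * x + (1 + T) * y) (ZMod 2))) = f.ker := by
    ext p
    obtain ⟨φ, hφ⟩ := p
    have hφd : ∀ x, φ x x = 0 := hφ.1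
    have hφc : ∀ x₀ x₁ x₂ : GaloisField 2 2, φ x₀ x₂ - φ x₀ x₁
        - φ (T * x₀ + (1 + T) * x₁) x₂
        + φ (T * x₀ + (1 + T) * x₂) (T * x₁ + (1 + T) * x₂) = 0 := hφ.2
    simp only [AddSubgroup.mem_addSubgroupOf, AddMonoidHom.mem_ker, AddMonoidHom.mem_range]
    constructor
    · rintro ⟨g, hg⟩
      have hg' : ∀ x y, g x - g (T * x + (1 + T) * y) = φ x y :=
        fun x y => congrFun (congrFun hg x) y
      show φ 0 1 + φ (1 + T) T = 0
      rw [← hg' 0 1, ← hg' (1 + T) T, hop_0_1, hop_3_2]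
      ring
    · intro hker0
      have hf : φ 0 1 + φ (1 + T) T = 0 := hker0
      have hc_0_0_1 : φ 0 1 - φ 0 0 - φ 0 1 + φ (1 + T) (1 + T) = 0 := by
        have H : φ 0 1 - φ 0 0 - φ (T * 0 + (1 + T) * 0) 1 + φ (T * 0 + (1 + T) * 1) (T * 0 + (1 + T) * 1) = 0 := hφc 0 0 1
        rw [hop_0_0, hop_0_1] at H
        exact H
      have hc_0_0_2 : φ 0 T - φ 0 0 - φ 0 T + φ 1 1 = 0 := by
        have H : φ 0 T - φ 0 0 - φ (T * 0 + (1 + T) * 0) T + φ (T * 0 + (1 + T) * T) (T * 0 + (1 + T) * T) = 0 := hφc 0 0 T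
        rw [hop_0_0, hop_0_2] at H
        exact H
      have hc_0_0_3 : φ 0 (1 + T) - φ 0 0 - φ 0 (1 + T) + φ T T = 0 := by
        have H : φ 0 (1 + T) - φ 0 0 - φ (T * 0 + (1 + T) * 0) (1 + T) + φ (T * 0 + (1 + T) * (1 + T)) (T * 0 + (1 + T) * (1 + T)) = 0 := hφc 0 0 (1 + T)
        rw [hop_0_0, hop_0_3] at H
        exact H
      have hc_0_1_0 : φ 0 0 - φ 0 1 - φ (1 + T) 0 + φ 0 T = 0 := by
        have H : φ 0 0 - φ 0 1 - φ (T * 0 + (1 + T) * 1) 0 + φ (T * 0 + (1 + T) * 0) (T * 1 + (1 + T) * 0) = 0 := hφc 0 1 0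
        rw [hop_0_1, hop_0_0, hop_1_0] at H
        exact H
      have hc_0_1_2 : φ 0 T - φ 0 1 - φ (1 + T) T + φ 1 (1 + T) = 0 := by
        have H : φ 0 T - φ 0 1 - φ (T * 0 + (1 + T) * 1) T + φ (T * 0 + (1 + T) * T) (T * 1 + (1 + T) * T) = 0 := hφc 0 1 T
        rw [hop_0_1, hop_0_2, hop_1_2] at H
        exact H
      have hc_0_1_3 : φ 0 (1 + T) - φ 0 1 - φ (1 + T) (1 + T) + φ T 0 = 0 := by
        have H : φ 0 (1 + T) - φ 0 1 - φ (T * 0 + (1 + T) * 1) (1 + T) + φ (T * 0 + (1 + T) * (1 + T)) (T * 1 + (1 + T) * (1 + T)) = 0 := hφc 0 1 (1 + T)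
        rw [hop_0_1, hop_0_3, hop_1_3] at H
        exact H
      have hc_0_2_0 : φ 0 0 - φ 0 T - φ 1 0 + φ 0 (1 + T) = 0 := by
        have H : φ 0 0 - φ 0 T - φ (T * 0 + (1 + T) * T) 0 + φ (T * 0 + (1 + T) * 0) (T * T + (1 + T) * 0) = 0 := hφc 0 T 0
        rw [hop_0_2, hop_0_0, hop_2_0] at H
        exact H
      have hc_0_2_3 : φ 0 (1 + T) - φ 0 T - φ 1 (1 + T) + φ T 1 = 0 := by
        have H : φ 0 (1 + T) - φ 0 T - φ (T * 0 + (1 + T) * T) (1 + T) + φ (T * 0 + (1 + T) * (1 + T)) (T * T + (1 + T) * (1 + T)) = 0 := hφc 0 T (1 + T)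
        rw [hop_0_2, hop_0_3, hop_2_3] at H
        exact H
      have hc_1_0_2 : φ 1 T - φ 1 0 - φ T T + φ (1 + T) 1 = 0 := by
        have H : φ 1 T - φ 1 0 - φ (T * 1 + (1 + T) * 0) T + φ (T * 1 + (1 + T) * T) (T * 0 + (1 + T) * T) = 0 := hφc 1 0 T
        rw [hop_1_0, hop_1_2, hop_0_2] at H
        exact H
      have hc_1_0_3 : φ 1 (1 + T) - φ 1 0 - φ T (1 + T) + φ 0 T = 0 := by
        have H : φ 1 (1 + T) - φ 1 0 - φ (T * 1 + (1 + T) * 0) (1 + T) + φ (T * 1 + (1 + T) * (1 + T)) (T * 0 + (1 + T) * (1 + T)) = 0 := hφc 1 0 (1 + T)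
        rw [hop_1_0, hop_1_3, hop_0_3] at H
        exact H
      have hc_1_2_0 : φ 1 0 - φ 1 T - φ (1 + T) 0 + φ T (1 + T) = 0 := by
        have H : φ 1 0 - φ 1 T - φ (T * 1 + (1 + T) * T) 0 + φ (T * 1 + (1 + T) * 0) (T * T + (1 + T) * 0) = 0 := hφc 1 T 0
        rw [hop_1_2, hop_1_0, hop_2_0] at H
        exact H
      refine ⟨fun x => φ 0 (T * x), ?_⟩
      funext x y
      show φ 0 (T * x) - φ 0 (T * (T * x + (1 + T) * y)) = φ x y
      rcases hcover x with hx | hx | hx | hx <;> rcases hcover y with hy | hy | hy | hy <;>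
        rw [hx, hy]
      · rw [hop_0_0, hmul_0]
        linear_combination hφd 0 - (φ 0 0) * h2Z
      · rw [hop_0_1, hmul_0, hmul_3]
        linear_combination hφd 0 - (φ 0 1) * h2Z
      · rw [hop_0_2, hmul_0, hmul_1]
        linear_combination hφd 0 - (φ 0 T) * h2Z
      · rw [hop_0_3, hmul_0, hmul_2]
        linear_combination hφd 0 - (φ 0 (1 + T)) * h2Z
      · rw [hop_1_0, hmul_1, hmul_2]
        linear_combination hc_0_2_0 + hφd 0 - (φ 0 0) * h2Z + φ 0 T * h2Z - (φ 0 (1 + T)) * h2Z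
      · rw [hop_1_1, hmul_1]
        linear_combination hc_0_0_2 + hφd 0 - (φ 1 1) * h2Z
      · rw [hop_1_2, hmul_1, hmul_3]
        linear_combination hc_0_1_0 + hc_0_1_2 + hc_1_0_3 + hc_1_2_0 + hφd 0 + hf - (φ 0 0) * h2Z - (φ 0 T) * h2Z - (φ 1 (1 + T)) * h2Z + φ (1 + T) 0 * h2Z
      · rw [hop_1_3, hmul_1, hmul_0]
        linear_combination hc_0_1_2 + hφd 0 + hf - (φ 0 0) * h2Z - (φ 1 (1 + T)) * h2Z
      · rw [hop_2_0, hmul_2, hmul_3]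
        linear_combination hc_0_0_1 + hc_0_1_3 + hφd 0 - (φ T 0) * h2Z
      · rw [hop_2_1, hmul_2, hmul_0]
        linear_combination hc_0_1_2 + hc_0_2_3 + hφd 0 + hf - (φ 0 0) * h2Z - (φ T 1) * h2Z
      · rw [hop_2_2, hmul_2]
        linear_combination hc_0_0_3 + hφd 0 - (φ T T) * h2Z
      · rw [hop_2_3, hmul_2, hmul_1]
        linear_combination hc_0_1_2 + hc_0_2_0 + hc_1_0_3 + hφd 0 + hf - (φ 0 0) * h2Z - (φ 0 T) * h2Z + φ 1 0 * h2Z - (φ 1 (1 + T)) * h2Z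
      · rw [hop_3_0, hmul_3, hmul_1]
        linear_combination hc_0_1_0 + hφd 0 - (φ 0 0) * h2Z + φ 0 1 * h2Z - (φ 0 T) * h2Z
      · rw [hop_3_1, hmul_3, hmul_2]
        linear_combination hc_0_0_3 + hc_0_1_0 + hc_0_1_2 + hc_0_2_0 + hc_1_0_2 + hc_1_0_3 + hc_1_2_0 + hφd 0 + hf - (φ 0 0) * h2Z + φ 0 1 * h2Z - (φ 0 T) * h2Z - (φ 0 (1 + T)) * h2Z + φ 1 0 * h2Z - (φ 1 (1 + T)) * h2Z + φ (1 + T) 0 * h2Z - (φ (1 + T) 1) * h2Z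
      · rw [hop_3_2, hmul_3, hmul_0]
        linear_combination hφd 0 + hf - (φ 0 0) * h2Z - (φ (1 + T) T) * h2Z
      · rw [hop_3_3, hmul_3]
        linear_combination hc_0_0_1 + hφd 0 - (φ (1 + T) (1 + T)) * h2Z
  have hsurj : Function.Surjective f := by
    have hmem : (fun x y => if x = 1 + T ∨ y = 1 + T ∨ x = y then (0 : ZMod 2) else 1) ∈
        quandleCocycle2 (fun x y => T * x + (1 + T) * y) (ZMod 2) := by
      refine ⟨fun x => if_pos (Or.inr (Or.inr rfl)), ?_⟩
      intro x₀ x₁ x₂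
      rcases hcover x₀ with h0 | h0 | h0 | h0 <;>
        rcases hcover x₁ with h1 | h1 | h1 | h1 <;>
        rcases hcover x₂ with h2 | h2 | h2 | h2 <;>
        rw [h0, h1, h2] <;>
        simp only [hop_0_0, hop_0_1, hop_0_2, hop_0_3, hop_1_0, hop_1_1, hop_1_2, hop_1_3,
          hop_2_0, hop_2_1, hop_2_2, hop_2_3, hop_3_0, hop_3_1, hop_3_2, hop_3_3] <;>
        simp [n01, n0T, n0U, n10, n1T, n1U, nT0, nT1, nTU, nU0, nU1, nUT] <;>
        decide
    intro c
    have hc : c = 0 ∨ c = 1 := by revert c; decide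
    rcases hc with rfl | rfl
    · exact ⟨0, map_zero f⟩
    · refine ⟨⟨_, hmem⟩, ?_⟩
      show (if (0 : GaloisField 2 2) = 1 + T ∨ (1 : GaloisField 2 2) = 1 + T
              ∨ (0 : GaloisField 2 2) = 1 then (0 : ZMod 2) else 1)
          + (if (1 + T : GaloisField 2 2) = 1 + T ∨ T = 1 + T
              ∨ (1 + T : GaloisField 2 2) = T then (0 : ZMod 2) else 1) = 1
      rw [if_neg (by push_neg; exact ⟨n0U, n1U, n01⟩), if_pos (Or.inl rfl)]
      decide
  rw [hker]
  exact ⟨QuotientAddGroup.quotientKerEquivOfSurjective f hsurj⟩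
end

section
/- Let R₃ be the dihedral quandle of order 3. Then the third quandle cohomology group H³_Q(R₃, ZMod 3) is isomorphic as an abelian group to ZMod 3. -/
/-- Functions `g : X → X → A` with `g(x,x) = 0` (the degenerate condition on
2-cochains), as an additive subgroup. -/
def degCochain2 (X : Type*) (A : Type*) [AddCommGroup A] :
    AddSubgroup (X → X → A) where
  carrier := {g | ∀ x, g x x = 0}
  zero_mem' := fun _ => rfl
  add_mem' := by
    intro g h hg hh x
    show g x x + h x x = 0
    rw [hg x, hh x, add_zero]
  neg_mem' := by
    intro g hg x
    show -g x x = 0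
    rw [hg x, neg_zero]

/-- The 3-coboundary homomorphism, sending a degenerate 2-cochain `g` to
`(x₀,x₁,x₂) ↦ g(x₀,x₂) − g(x₀,x₁) − g(x₀∗x₁, x₂) + g(x₀∗x₂, x₁∗x₂)`. -/
def quandleCoboundary3 {X : Type*} (op : X → X → X) (A : Type*)
    [AddCommGroup A] : degCochain2 X A →+ (X → X → X → A) where
  toFun g := fun x₀ x₁ x₂ =>
    (g : X → X → A) x₀ x₂ - (g : X → X → A) x₀ x₁
      - (g : X → X → A) (op x₀ x₁) x₂ + (g : X → X → A) (op x₀ x₂) (op x₁ x₂)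
  map_zero' := by funext x₀ x₁ x₂; simp
  map_add' g h := by
    funext x₀ x₁ x₂
    simp only [AddSubgroup.coe_add, Pi.add_apply]
    abel

/-- The abelian group of quandle 3-cocycles of `(X, op)` with coefficients in
`A`: functions `θ : X³ → A` with `θ(x,x,y) = 0`, `θ(x,y,y) = 0`, and the
3-cocycle condition. -/
def quandleCocycle3 {X : Type*} (op : X → X → X) (A : Type*) [AddCommGroup A] :
    AddSubgroup (X → X → X → A) where
  carrier := {θ | (∀ x y, θ x x y = 0) ∧ (∀ x y, θ x y y = 0) ∧
    ∀ x₀ x₁ x₂ x₃,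
      θ x₀ x₂ x₃ - θ x₀ x₁ x₃ + θ x₀ x₁ x₂ - θ (op x₀ x₁) x₂ x₃
        + θ (op x₀ x₂) (op x₁ x₂) x₃ - θ (op x₀ x₃) (op x₁ x₃) (op x₂ x₃) = 0}
  zero_mem' := ⟨fun _ _ => rfl, fun _ _ => rfl, fun _ _ _ _ => by simp⟩
  add_mem' := by
    rintro θ η ⟨hθ1, hθ2, hθ3⟩ ⟨hη1, hη2, hη3⟩
    refine ⟨fun x y => ?_, fun x y => ?_, fun x₀ x₁ x₂ x₃ => ?_⟩
    · show θ x x y + η x x y = 0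
      rw [hθ1 x y, hη1 x y, add_zero]
    · show θ x y y + η x y y = 0
      rw [hθ2 x y, hη2 x y, add_zero]
    · show (θ x₀ x₂ x₃ + η x₀ x₂ x₃) - (θ x₀ x₁ x₃ + η x₀ x₁ x₃)
          + (θ x₀ x₁ x₂ + η x₀ x₁ x₂)
          - (θ (op x₀ x₁) x₂ x₃ + η (op x₀ x₁) x₂ x₃)
          + (θ (op x₀ x₂) (op x₁ x₂) x₃ + η (op x₀ x₂) (op x₁ x₂) x₃)
          - (θ (op x₀ x₃) (op x₁ x₃) (op x₂ x₃)
              + η (op x₀ x₃) (op x₁ x₃) (op x₂ x₃)) = 0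
      calc (θ x₀ x₂ x₃ + η x₀ x₂ x₃) - (θ x₀ x₁ x₃ + η x₀ x₁ x₃)
            + (θ x₀ x₁ x₂ + η x₀ x₁ x₂)
            - (θ (op x₀ x₁) x₂ x₃ + η (op x₀ x₁) x₂ x₃)
            + (θ (op x₀ x₂) (op x₁ x₂) x₃ + η (op x₀ x₂) (op x₁ x₂) x₃)
            - (θ (op x₀ x₃) (op x₁ x₃) (op x₂ x₃)
                + η (op x₀ x₃) (op x₁ x₃) (op x₂ x₃))
          = (θ x₀ x₂ x₃ - θ x₀ x₁ x₃ + θ x₀ x₁ x₂ - θ (op x₀ x₁) x₂ x₃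
              + θ (op x₀ x₂) (op x₁ x₂) x₃
              - θ (op x₀ x₃) (op x₁ x₃) (op x₂ x₃))
            + (η x₀ x₂ x₃ - η x₀ x₁ x₃ + η x₀ x₁ x₂ - η (op x₀ x₁) x₂ x₃
              + η (op x₀ x₂) (op x₁ x₂) x₃
              - η (op x₀ x₃) (op x₁ x₃) (op x₂ x₃)) := by abel
        _ = 0 := by rw [hθ3 x₀ x₁ x₂ x₃, hη3 x₀ x₁ x₂ x₃, add_zero]
  neg_mem' := by
    rintro θ ⟨h1, h2, h3⟩
    refine ⟨fun x y => ?_, fun x y => ?_, fun x₀ x₁ x₂ x₃ => ?_⟩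
    · show -θ x x y = 0
      rw [h1 x y, neg_zero]
    · show -θ x y y = 0
      rw [h2 x y, neg_zero]
    · show -θ x₀ x₂ x₃ - -θ x₀ x₁ x₃ + -θ x₀ x₁ x₂ - -θ (op x₀ x₁) x₂ x₃
          + -θ (op x₀ x₂) (op x₁ x₂) x₃
          - -θ (op x₀ x₃) (op x₁ x₃) (op x₂ x₃) = 0
      calc -θ x₀ x₂ x₃ - -θ x₀ x₁ x₃ + -θ x₀ x₁ x₂ - -θ (op x₀ x₁) x₂ x₃
            + -θ (op x₀ x₂) (op x₁ x₂) x₃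
            - -θ (op x₀ x₃) (op x₁ x₃) (op x₂ x₃)
          = -(θ x₀ x₂ x₃ - θ x₀ x₁ x₃ + θ x₀ x₁ x₂ - θ (op x₀ x₁) x₂ x₃
              + θ (op x₀ x₂) (op x₁ x₂) x₃
              - θ (op x₀ x₃) (op x₁ x₃) (op x₂ x₃)) := by abel
        _ = 0 := by rw [h3 x₀ x₁ x₂ x₃, neg_zero]

private def phiAux3 : (ZMod 3 → ZMod 3 → ZMod 3 → ZMod 3) →+ ZMod 3 where
  toFun θ := θ 0 1 0 + θ 0 2 1
  map_zero' := rfl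
  map_add' _ _ := by simp only [Pi.add_apply]; ring

private def tstar3 : ZMod 3 → ZMod 3 → ZMod 3 → ZMod 3 := fun a b c =>
  if (a = 0 ∧ b = 1 ∧ c = 2) ∨ (a = 0 ∧ b = 2 ∧ c = 1) ∨ (a = 1 ∧ b = 0 ∧ c = 1)
      ∨ (a = 1 ∧ b = 0 ∧ c = 2) ∨ (a = 2 ∧ b = 0 ∧ c = 1) ∨ (a = 2 ∧ b = 0 ∧ c = 2)
  then 1 else 0

private lemma cob_apply3 (gs : degCochain2 (ZMod 3) (ZMod 3)) (x y z : ZMod 3) :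
    quandleCoboundary3 (fun x y : ZMod 3 => 2 * y - x) (ZMod 3) gs x y z
      = (gs : ZMod 3 → ZMod 3 → ZMod 3) x z - (gs : ZMod 3 → ZMod 3 → ZMod 3) x y
        - (gs : ZMod 3 → ZMod 3 → ZMod 3) (2*y-x) z
        + (gs : ZMod 3 → ZMod 3 → ZMod 3) (2*z-x) (2*z-y) := rfl

private lemma val_mk3 (f : ZMod 3 → ZMod 3 → ZMod 3) (hf : f ∈ degCochain2 (ZMod 3) (ZMod 3)) :
    ((⟨f, hf⟩ : degCochain2 (ZMod 3) (ZMod 3)) : ZMod 3 → ZMod 3 → ZMod 3) = f := rfl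

/-- `H³_Q(R₃, ℤ₃) ≅ ℤ₃`: for the dihedral quandle `R₃` (`ZMod 3` with
`x ∗ y = 2y − x`), the quotient of the group of quandle 3-cocycles with
`ZMod 3` coefficients by the subgroup of 3-coboundaries is isomorphic to
`ZMod 3`. -/
theorem H3_R3_ZMod3 :
    Nonempty
      ((quandleCocycle3 (fun x y : ZMod 3 => 2 * y - x) (ZMod 3) ⧸
        ((quandleCoboundary3 (fun x y : ZMod 3 => 2 * y - x) (ZMod 3)).range.addSubgroupOf
          (quandleCocycle3 (fun x y : ZMod 3 => 2 * y - x) (ZMod 3))))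
      ≃+ ZMod 3) := by
  have h3z : (3:ZMod 3) = 0 := by decide
  have hz3 : ∀ y : ZMod 3, y = 0 ∨ y = 1 ∨ y = 2 := by decide
  set ψ : (quandleCocycle3 (fun x y : ZMod 3 => 2 * y - x) (ZMod 3)) →+ ZMod 3 :=
    phiAux3.comp ((quandleCocycle3 (fun x y : ZMod 3 => 2 * y - x) (ZMod 3)).subtype) with hψ
  have hker : ((quandleCoboundary3 (fun x y : ZMod 3 => 2 * y - x) (ZMod 3)).range.addSubgroupOf
      (quandleCocycle3 (fun x y : ZMod 3 => 2 * y - x) (ZMod 3))) = ψ.ker := by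
    ext ⟨θf, hθ⟩
    rw [AddSubgroup.mem_addSubgroupOf, AddMonoidHom.mem_ker, AddMonoidHom.mem_range]
    have H1 : ∀ x y : ZMod 3, θf x x y = 0 := hθ.1
    have H2 : ∀ x y : ZMod 3, θf x y y = 0 := hθ.2.1
    have H3 : ∀ x₀ x₁ x₂ x₃ : ZMod 3,
        θf x₀ x₂ x₃ - θf x₀ x₁ x₃ + θf x₀ x₁ x₂ - θf (2*x₁-x₀) x₂ x₃
          + θf (2*x₂-x₀) (2*x₂-x₁) x₃ - θf (2*x₃-x₀) (2*x₃-x₁) (2*x₃-x₂) = 0 := hθ.2.2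
    have zl00 : (2*0-0 : ZMod 3) = 0 := by decide
    have zl01 : (2*1-0 : ZMod 3) = 2 := by decide
    have zl02 : (2*2-0 : ZMod 3) = 1 := by decide
    have zl10 : (2*0-1 : ZMod 3) = 2 := by decide
    have zl11 : (2*1-1 : ZMod 3) = 1 := by decide
    have zl12 : (2*2-1 : ZMod 3) = 0 := by decide
    have zl20 : (2*0-2 : ZMod 3) = 1 := by decide
    have zl21 : (2*1-2 : ZMod 3) = 0 := by decide
    have zl22 : (2*2-2 : ZMod 3) = 2 := by decide
    constructor
    · rintro ⟨gs, hgs⟩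
      show θf 0 1 0 + θf 0 2 1 = 0
      have hA := congrFun (congrFun (congrFun hgs 0) 1) 0
      have hB := congrFun (congrFun (congrFun hgs 0) 2) 1
      rw [cob_apply3] at hA hB
      simp only [zl00, zl01, zl02, zl10, zl11, zl12, zl20, zl21, zl22] at hA hB
      rw [← hA, ← hB]
      linear_combination (gs.2 0) + (2:ZMod 3) * (gs.2 1) + (((-1:ZMod 3) * ((gs : ZMod 3 → ZMod 3 → ZMod 3) 1 1))) * h3z
    · intro hphi0
      have hphi : θf 0 1 0 + θf 0 2 1 = 0 := hphi0
      have e0002 := H3 0 0 0 2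
      simp only [zl00, zl01, zl02, zl10, zl11, zl12, zl20, zl21, zl22] at e0002
      have e0010 := H3 0 0 1 0
      simp only [zl00, zl01, zl02, zl10, zl11, zl12, zl20, zl21, zl22] at e0010
      have e0012 := H3 0 0 1 2
      simp only [zl00, zl01, zl02, zl10, zl11, zl12, zl20, zl21, zl22] at e0012
      have e0020 := H3 0 0 2 0
      simp only [zl00, zl01, zl02, zl10, zl11, zl12, zl20, zl21, zl22] at e0020
      have e0101 := H3 0 1 0 1
      simp only [zl00, zl01, zl02, zl10, zl11, zl12, zl20, zl21, zl22] at e0101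
      have e0102 := H3 0 1 0 2
      simp only [zl00, zl01, zl02, zl10, zl11, zl12, zl20, zl21, zl22] at e0102
      have e0111 := H3 0 1 1 1
      simp only [zl00, zl01, zl02, zl10, zl11, zl12, zl20, zl21, zl22] at e0111
      have e0112 := H3 0 1 1 2
      simp only [zl00, zl01, zl02, zl10, zl11, zl12, zl20, zl21, zl22] at e0112
      have e0120 := H3 0 1 2 0
      simp only [zl00, zl01, zl02, zl10, zl11, zl12, zl20, zl21, zl22] at e0120
      have e0121 := H3 0 1 2 1
      simp only [zl00, zl01, zl02, zl10, zl11, zl12, zl20, zl21, zl22] at e0121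
      have e0202 := H3 0 2 0 2
      simp only [zl00, zl01, zl02, zl10, zl11, zl12, zl20, zl21, zl22] at e0202
      have e0212 := H3 0 2 1 2
      simp only [zl00, zl01, zl02, zl10, zl11, zl12, zl20, zl21, zl22] at e0212
      have e1012 := H3 1 0 1 2
      simp only [zl00, zl01, zl02, zl10, zl11, zl12, zl20, zl21, zl22] at e1012
      have hgd : (fun x y => (2 * θf 1 0 1 + θf 1 0 2) * ((1 - (x - 0)^2) * (1 - (y - 1)^2)) + (θf 0 1 0 + 2 * θf 1 0 1 + θf 1 0 2) * ((1 - (x - 0)^2) * (1 - (y - 2)^2)) + (2 * θf 0 1 0 + θf 0 1 2) * ((1 - (x - 1)^2) * (1 - (y - 0)^2)) + (2 * θf 0 1 0 + θf 0 1 2 + θf 1 0 1) * ((1 - (x - 1)^2) * (1 - (y - 2)^2))) ∈ degCochain2 (ZMod 3) (ZMod 3) := by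
        intro z
        obtain rfl | rfl | rfl := hz3 z
        · linear_combination (((-1:ZMod 3) * (θf 0 1 0)) + ((-2:ZMod 3) * (θf 1 0 1)) + ((-1:ZMod 3) * (θf 1 0 2))) * h3z
        · linear_combination (0:ZMod 3) * h3z
        · linear_combination (((-1:ZMod 3) * (θf 0 1 0)) + ((-2:ZMod 3) * (θf 1 0 1)) + ((-1:ZMod 3) * (θf 1 0 2))) * h3z
      refine ⟨⟨_, hgd⟩, ?_⟩
      funext x₀ x₁ x₂
      rw [cob_apply3, val_mk3]
      obtain rfl | rfl | rfl := hz3 x₀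
      · obtain rfl | rfl | rfl := hz3 x₁
        · obtain rfl | rfl | rfl := hz3 x₂
          · linear_combination (2:ZMod 3) * (H1 0 0) + (((-1:ZMod 3) * (θf 0 0 0))) * h3z
          · linear_combination (2:ZMod 3) * (H1 0 1) + (((-1:ZMod 3) * (θf 0 0 1))) * h3z
          · linear_combination (2:ZMod 3) * (H1 0 2) + (((-1:ZMod 3) * (θf 0 0 2)) + ((112:ZMod 3) * (θf 0 1 0)) + ((48:ZMod 3) * (θf 0 1 2)) + ((120:ZMod 3) * (θf 1 0 1)) + ((56:ZMod 3) * (θf 1 0 2))) * h3z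
        · obtain rfl | rfl | rfl := hz3 x₂
          · linear_combination (((-7:ZMod 3) * (θf 0 1 0)) + ((-16:ZMod 3) * (θf 1 0 1)) + ((-8:ZMod 3) * (θf 1 0 2))) * h3z
          · linear_combination (2:ZMod 3) * (H2 0 1) + (((-1:ZMod 3) * (θf 0 1 1))) * h3z
          · linear_combination (((44:ZMod 3) * (θf 0 1 0)) + ((21:ZMod 3) * (θf 0 1 2)) + ((32:ZMod 3) * (θf 1 0 1)) + ((16:ZMod 3) * (θf 1 0 2))) * h3z
        · obtain rfl | rfl | rfl := hz3 x₂
          · linear_combination (2:ZMod 3) * (H1 0 0) + (H1 0 1) + (H2 0 1) + (2:ZMod 3) * (H1 0 2) + (2:ZMod 3) * e0010 + (2:ZMod 3) * e0112 + (2:ZMod 3) * e0120 + (2:ZMod 3) * hphi + (((-1:ZMod 3) * (θf 0 0 1)) + ((-32:ZMod 3) * (θf 0 1 0)) + ((-1:ZMod 3) * (θf 0 1 1)) + ((-6:ZMod 3) * (θf 0 1 2)) + ((-1:ZMod 3) * (θf 0 2 0)) + ((-56:ZMod 3) * (θf 1 0 1)) + ((-24:ZMod 3) * (θf 1 0 2)))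 * h3z
          · linear_combination (2:ZMod 3) * hphi + (((2:ZMod 3) * (θf 0 1 0)) + ((-1:ZMod 3) * (θf 0 2 1)) + ((16:ZMod 3) * (θf 1 0 1)) + ((8:ZMod 3) * (θf 1 0 2))) * h3z
          · linear_combination (2:ZMod 3) * (H2 0 2) + (((-1:ZMod 3) * (θf 0 2 2))) * h3z
      · obtain rfl | rfl | rfl := hz3 x₁
        · obtain rfl | rfl | rfl := hz3 x₂
          · linear_combination (2:ZMod 3) * (H2 0 1) + e0112 + (((-1:ZMod 3) * (θf 0 1 1))) * h3z
          · linear_combination ((θf 1 0 1)) * h3z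
          · linear_combination (((40:ZMod 3) * (θf 0 1 0)) + ((16:ZMod 3) * (θf 0 1 2)) + ((64:ZMod 3) * (θf 1 0 1)) + ((29:ZMod 3) * (θf 1 0 2))) * h3z
        · obtain rfl | rfl | rfl := hz3 x₂
          · linear_combination (2:ZMod 3) * (H1 0 0) + (2:ZMod 3) * (H1 0 1) + (H1 0 2) + (2:ZMod 3) * e0020 + (((-1:ZMod 3) * (θf 0 0 2)) + ((16:ZMod 3) * (θf 0 1 0)) + ((8:ZMod 3) * (θf 0 1 2)) + ((8:ZMod 3) * (θf 1 0 1)) + ((-1:ZMod 3) * (θf 1 1 0))) * h3z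
          · linear_combination (2:ZMod 3) * (H1 0 0) + e0002 + (((-1:ZMod 3) * (θf 0 0 0))) * h3z
          · linear_combination (2:ZMod 3) * (H1 1 2) + (((16:ZMod 3) * (θf 0 1 0)) + ((8:ZMod 3) * (θf 0 1 2)) + ((16:ZMod 3) * (θf 1 0 1)) + ((8:ZMod 3) * (θf 1 0 2)) + ((-1:ZMod 3) * (θf 1 1 2))) * h3z
        · obtain rfl | rfl | rfl := hz3 x₂
          · linear_combination (2:ZMod 3) * (H1 0 2) + (H1 1 2) + e0102 + e0212 + (2:ZMod 3) * hphi + (((-1:ZMod 3) * (θf 0 0 2)) + ((23:ZMod 3) * (θf 0 1 0)) + ((16:ZMod 3) * (θf 0 1 2)) + ((-1:ZMod 3) * (θf 0 2 1)) + ((-5:ZMod 3) * (θf 1 0 1)) + ((-8:ZMod 3) * (θf 1 0 2))) * h3z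
          · linear_combination (2:ZMod 3) * (H1 0 0) + (H1 0 1) + (H2 0 1) + (H1 0 2) + (H2 0 2) + (2:ZMod 3) * e0010 + (2:ZMod 3) * e0112 + (2:ZMod 3) * e0120 + e0202 + (2:ZMod 3) * hphi + (((-1:ZMod 3) * (θf 0 0 1)) + ((-1:ZMod 3) * (θf 0 1 1)) + ((-1:ZMod 3) * (θf 0 1 2)) + ((-1:ZMod 3) * (θf 0 2 0)) + ((4:ZMod 3) * (θf 1 0 1)) + ((3:ZMod 3) * (θf 1 0 2))) * h3z
          · linear_combination (2:ZMod 3) * (H2 1 2) + (((-1:ZMod 3) * (θf 1 2 2))) * h3z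
      · obtain rfl | rfl | rfl := hz3 x₁
        · obtain rfl | rfl | rfl := hz3 x₂
          · linear_combination (2:ZMod 3) * (H2 2 0) + (((-1:ZMod 3) * (θf 2 0 0))) * h3z
          · linear_combination (2:ZMod 3) * (H1 0 1) + (H2 0 1) + (H1 1 2) + (H2 1 2) + e0101 + (2:ZMod 3) * e1012 + (2:ZMod 3) * hphi + (((-1:ZMod 3) * (θf 0 0 1)) + ((-3:ZMod 3) * (θf 0 1 0)) + ((-1:ZMod 3) * (θf 0 2 1)) + ((-6:ZMod 3) * (θf 1 0 1)) + ((-2:ZMod 3) * (θf 1 0 2)) + ((-1:ZMod 3) * (θf 1 1 2)) + ((-1:ZMod 3) * (θf 1 2 2)) + (θf 2 1 2)) * h3z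
          · linear_combination (2:ZMod 3) * (H1 0 2) + (2:ZMod 3) * (H2 0 2) + e0102 + (((-1:ZMod 3) * (θf 0 0 2)) + ((-11:ZMod 3) * (θf 0 1 0)) + ((-5:ZMod 3) * (θf 0 1 2)) + ((-1:ZMod 3) * (θf 0 2 2)) + ((19:ZMod 3) * (θf 1 0 1)) + ((8:ZMod 3) * (θf 1 0 2))) * h3z
        · obtain rfl | rfl | rfl := hz3 x₂
          · linear_combination (H2 0 1) + (H1 2 1) + e0121 + (2:ZMod 3) * hphi + (((54:ZMod 3) * (θf 0 1 0)) + ((21:ZMod 3) * (θf 0 1 2)) + ((-1:ZMod 3) * (θf 0 2 1)) + ((53:ZMod 3) * (θf 1 0 1)) + ((16:ZMod 3) * (θf 1 0 2))) * h3z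
          · linear_combination (2:ZMod 3) * (H2 0 1) + e0111 + (((-1:ZMod 3) * (θf 0 1 1))) * h3z
          · linear_combination (2:ZMod 3) * (H1 1 2) + (2:ZMod 3) * (H2 1 2) + e1012 + (((-1:ZMod 3) * (θf 0 1 0)) + ((5:ZMod 3) * (θf 1 0 1)) + ((3:ZMod 3) * (θf 1 0 2)) + ((-1:ZMod 3) * (θf 1 1 2)) + ((-1:ZMod 3) * (θf 1 2 2))) * h3z
        · obtain rfl | rfl | rfl := hz3 x₂
          · linear_combination (2:ZMod 3) * (H1 0 0) + (H1 0 1) + (2:ZMod 3) * (H1 0 2) + (2:ZMod 3) * e0010 + (((-1:ZMod 3) * (θf 0 0 1)) + ((112:ZMod 3) * (θf 0 1 0)) + ((48:ZMod 3) * (θf 0 1 2)) + ((88:ZMod 3) * (θf 1 0 1)) + ((24:ZMod 3) * (θf 1 0 2)) + ((-1:ZMod 3) * (θf 2 2 0))) * h3z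
          · linear_combination (2:ZMod 3) * (H1 2 1) + (((-1:ZMod 3) * (θf 2 2 1))) * h3z
          · linear_combination (2:ZMod 3) * (H1 0 0) + (2:ZMod 3) * e0012 + (2:ZMod 3) * e0020 + (((-1:ZMod 3) * (θf 2 2 2))) * h3z
  have hsurj : Function.Surjective ψ := by
    have hts : tstar3 ∈ quandleCocycle3 (fun x y : ZMod 3 => 2 * y - x) (ZMod 3) :=
      ⟨by decide, by decide, by decide⟩
    intro c
    obtain rfl | rfl | rfl := hz3 c
    · exact ⟨0, map_zero ψ⟩
    · refine ⟨⟨tstar3, hts⟩, ?_⟩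
      show tstar3 0 1 0 + tstar3 0 2 1 = 1
      decide
    · refine ⟨⟨tstar3, hts⟩ + ⟨tstar3, hts⟩, ?_⟩
      rw [map_add]
      show (tstar3 0 1 0 + tstar3 0 2 1) + (tstar3 0 1 0 + tstar3 0 2 1) = 2
      decide
  exact ⟨(QuotientAddGroup.quotientAddEquivOfEq hker).trans
    (QuotientAddGroup.quotientKerEquivOfSurjective ψ hsurj)⟩
end

section
/- Let m ≥ 2 and n ≥ 2, and let A = A(−1) be the torus-braid monodromy matrix of size n over ZMod (2m) (so T = −1, corresponding to the dihedral quandle R_{2m}). Then the color period of A (the least positive integer p with A^p = I) is: p = 2n if n is odd, and p = m·n if n is even. -/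
/-!
Write `P` for the cyclic shift matrix and `e` for the last basis vector. Then
`A(T) = T • P + (1 - T) • e 𝟙ᵀ`, and since `𝟙ᵀ P = 𝟙ᵀ` and `𝟙ᵀ e = 1`, induction gives
`A(T)^k = T^k • P^k + (1 - T) • (∑_{j<k} T^j • P^j e) 𝟙ᵀ`. As `P^n = 1`, this makes
`A(T)^n = T^n • 1 + (1 - T) • C` for a rank-one matrix `C` with `C * C = (∑_{j<n} T^j) • C`
and last row `𝟙ᵀ`.

Now take `T = -1` over `ZMod (2m)`. Reducing modulo 2 sends `A` to `A(1) = P`, of order `n`, so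
`n` divides the period, which is therefore `n` times the order of `B = A^n`.
If `n` is odd, `B = -1 + 2C` with `C * C = C`, an involution `≠ 1`; if `n` is even,
`B = 1 + 2C` with `C * C = 0`, so `B^q = 1 + 2q • C`, which is `1` exactly when `m ∣ q`.
-/

open Matrix Finset Fin.NatCast

theorem finRotate_pow_apply {n : ℕ} (j : ℕ) (i : Fin (n + 1)) :
    (finRotate (n + 1) ^ j) i = i + j := by
  induction j with
  | zero => simp
  | succ j ih => rw [pow_succ', Equiv.Perm.mul_apply, ih, finRotate_apply, Nat.cast_succ, add_assoc]

theorem finRotate_pow_eq_one_iff {n : ℕ} (p : ℕ) : finRotate (n + 1) ^ p = 1 ↔ n + 1 ∣ p := by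
  simp [Equiv.ext_iff, finRotate_pow_apply, ← Fin.natCast_eq_zero]

theorem permMatrix_pow {ι R : Type*} [DecidableEq ι] [Fintype ι] [Semiring R]
    (σ : Equiv.Perm ι) (j : ℕ) : (σ ^ j).permMatrix R = σ.permMatrix R ^ j := by
  simpa using map_pow (permMatrixHom : Equiv.Perm ι →* Matrix ι ι R) σ⁻¹ j

theorem one_vecMul_permMatrix {ι R : Type*} [DecidableEq ι] [Fintype ι] [CommRing R]
    (σ : Equiv.Perm ι) : 1 ᵥ* σ.permMatrix R = 1 := by
  rw [vecMul_permMatrix]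
  rfl

theorem one_add_pow_of_mul_self_eq_zero {A : Type*} [Semiring A] {x : A} (hx : x * x = 0)
    (q : ℕ) : (1 + x) ^ q = 1 + q • x := by
  induction q with
  | zero => simp
  | succ q ih => simp [pow_succ, ih, add_mul, mul_add, mul_assoc, hx, add_smul]; abel

theorem orderOf_eq_mul_orderOf_pow {G : Type*} [Monoid G] {x : G} {k : ℕ} (hk : k ≠ 0)
    (h : k ∣ orderOf x) : orderOf x = k * orderOf (x ^ k) := by
  rw [orderOf_pow_of_dvd hk h, Nat.mul_div_cancel' h]

theorem isLeast_orderOf {G : Type*} [Monoid G] {x : G} (h : 0 < orderOf x) :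
    IsLeast {p : ℕ | 0 < p ∧ x ^ p = 1} (orderOf x) :=
  ⟨⟨h, pow_orderOf_eq_one x⟩, fun _ hp => orderOf_le_of_pow_eq_one hp.1 hp.2⟩

theorem torusMatrix_map {R S : Type*} [CommRing R] [CommRing S] (f : R →+* S) (n : ℕ) (T : R) :
    f.mapMatrix (torusMatrix R n T) = torusMatrix S n (f T) := by
  ext i j
  simp only [RingHom.mapMatrix_apply, map_apply, torusMatrix, of_apply]
  split_ifs <;> simp

section

variable {R : Type*} [CommRing R] {n : ℕ}

local notation "P" => Equiv.Perm.permMatrix R (finRotate (n + 1))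

theorem torusMatrix_eq_smul_add_vecMulVec (T : R) :
    torusMatrix R (n + 1) T = T • P + (1 - T) • vecMulVec (Pi.single (Fin.last n) 1) 1 := by
  ext i j
  rcases eq_or_ne i (Fin.last n) with rfl | hi
  · rcases eq_or_ne j 0 with rfl | hj
    · simp [torusMatrix]
    · simp [torusMatrix, hj, Ne.symm hj, PEquiv.toMatrix_apply]
  · have hi' : (i : ℕ) ≠ n := fun h => hi (Fin.ext h)
    simp only [torusMatrix, of_apply, Nat.add_sub_cancel, hi', if_false]
    simp [hi, PEquiv.toMatrix_apply, Fin.ext_iff,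
      Fin.val_add_one_of_lt (Fin.lt_last_iff_ne_last.2 hi), eq_comm (a := (j : ℕ))]

theorem torusMatrix_one : torusMatrix R (n + 1) 1 = P := by
  simp [torusMatrix_eq_smul_add_vecMulVec]

theorem permMatrix_finRotate_pow_eq_one_iff [Nontrivial R] (p : ℕ) :
    P ^ p = 1 ↔ n + 1 ∣ p := by
  rw [← permMatrix_pow]
  refine ⟨fun h => ?_, fun h => by rw [(finRotate_pow_eq_one_iff p).2 h, permMatrix_one]⟩
  simpa [PEquiv.toMatrix_apply, finRotate_pow_apply] using congr_fun (congr_fun h 0) 0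

theorem orderOf_permMatrix_finRotate [Nontrivial R] : orderOf P = n + 1 :=
  Nat.dvd_right_iff_eq.mp fun p => by
    rw [orderOf_dvd_iff_pow_eq_one, permMatrix_finRotate_pow_eq_one_iff]

theorem dvd_orderOf_torusMatrix {S : Type*} [CommRing S] [Nontrivial S] (f : R →+* S) {T : R}
    (hT : f T = 1) : n + 1 ∣ orderOf (torusMatrix R (n + 1) T) := by
  have h := orderOf_map_dvd (f.mapMatrix (m := Fin (n + 1))).toMonoidHom (torusMatrix R (n + 1) T)
  rwa [RingHom.toMonoidHom_eq_coe, MonoidHom.coe_coe, torusMatrix_map, hT, torusMatrix_one,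
    orderOf_permMatrix_finRotate] at h

theorem torusMatrix_pow (T : R) (k : ℕ) :
    torusMatrix R (n + 1) T ^ k = T ^ k • P ^ k + (1 - T) •
      vecMulVec (∑ j ∈ range k, T ^ j • P ^ j *ᵥ Pi.single (Fin.last n) 1) 1 := by
  induction k with
  | zero => simp
  | succ k ih =>
    rw [pow_succ, ih, torusMatrix_eq_smul_add_vecMulVec, sum_range_succ]
    generalize ∑ j ∈ range k, T ^ j • P ^ j *ᵥ Pi.single (Fin.last n) 1 = w
    simp only [add_mul, mul_add, smul_mul_smul, ← pow_succ, vecMulVec_mul, one_vecMul_permMatrix,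
      mul_vecMulVec, vecMulVec_mulVec, one_dotProduct, sum_pi_single', add_vecMulVec,
      smul_vecMulVec, mem_univ, if_true, MulOpposite.op_one, one_smul]
    module

variable (R n) in
def torusCorrection (T : R) : Matrix (Fin (n + 1)) (Fin (n + 1)) R :=
  vecMulVec (∑ j ∈ range (n + 1), T ^ j • P ^ j *ᵥ Pi.single (Fin.last n) 1) 1

theorem torusMatrix_pow_succ_self (T : R) :
    torusMatrix R (n + 1) T ^ (n + 1) = T ^ (n + 1) • 1 + (1 - T) • torusCorrection R n T := by
  rw [torusMatrix_pow, ← permMatrix_pow, (finRotate_pow_eq_one_iff _).2 dvd_rfl, permMatrix_one,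
    torusCorrection]

theorem torusCorrection_mul_self (T : R) :
    torusCorrection R n T * torusCorrection R n T =
      (∑ j ∈ range (n + 1), T ^ j) • torusCorrection R n T := by
  simp only [torusCorrection, vecMulVec_mul_vecMulVec, vecMulVec_smul, dotProduct_sum,
    dotProduct_smul, dotProduct_mulVec, ← permMatrix_pow, one_vecMul_permMatrix, one_dotProduct,
    sum_pi_single', mem_univ, if_true, smul_eq_mul, mul_one]

theorem torusCorrection_last_apply (T : R) (j : Fin (n + 1)) :
    torusCorrection R n T (Fin.last n) j = 1 := by
  simp only [torusCorrection, vecMulVec_apply, Pi.one_apply, mul_one, Finset.sum_apply,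
    Pi.smul_apply, ← permMatrix_pow, permMatrix_mulVec, Function.comp_apply, finRotate_pow_apply,
    Pi.single_apply, add_eq_left, Fin.natCast_eq_zero]
  rw [sum_range_succ', sum_eq_zero fun j hj => ?_]
  · simp
  · simp [Nat.not_dvd_of_pos_of_lt j.succ_pos (Nat.succ_lt_succ (mem_range.1 hj))]

theorem torusMatrix_pow_succ_self_apply_last_zero (hn : n ≠ 0) (T : R) :
    (torusMatrix R (n + 1) T ^ (n + 1)) (Fin.last n) 0 = 1 - T := by
  have hlast : Fin.last n ≠ 0 := fun h => hn (congrArg Fin.val h)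
  simp [torusMatrix_pow_succ_self, torusCorrection_last_apply, one_apply_ne hlast]

theorem torusMatrix_neg_one_pow_succ_self :
    torusMatrix R (n + 1) (-1) ^ (n + 1) =
      (-1 : R) ^ (n + 1) • (1 : Matrix (Fin (n + 1)) (Fin (n + 1)) R) +
        (2 : R) • torusCorrection R n (-1) := by
  rw [torusMatrix_pow_succ_self, sub_neg_eq_add, one_add_one_eq_two]

theorem torusMatrix_neg_one_pow_succ_self_ne_one (hn : n ≠ 0) (h2 : (2 : R) ≠ 0) :
    torusMatrix R (n + 1) (-1) ^ (n + 1) ≠ 1 := by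
  intro h
  have h' := torusMatrix_pow_succ_self_apply_last_zero hn (-1 : R)
  rw [h, one_apply_ne (fun h => hn (congrArg Fin.val h)), sub_neg_eq_add, one_add_one_eq_two] at h'
  exact h2 h'.symm

theorem torusMatrix_neg_one_pow_succ_self_sq (hn : Even n) :
    (torusMatrix R (n + 1) (-1) ^ (n + 1)) ^ 2 = 1 := by
  have hC := torusCorrection_mul_self (n := n) (-1 : R)
  rw [neg_one_geom_sum, if_neg (Nat.not_even_iff_odd.2 hn.add_one), one_smul] at hC
  rw [torusMatrix_neg_one_pow_succ_self, hn.add_one.neg_one_pow, sq]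
  simp only [add_mul, mul_add, smul_mul_smul, Matrix.one_mul, Matrix.mul_one, hC]
  module

theorem torusMatrix_neg_one_pow_succ_self_pow_eq_one_iff (hn : Odd n) (q : ℕ) :
    (torusMatrix R (n + 1) (-1) ^ (n + 1)) ^ q = 1 ↔ ((2 * q : ℕ) : R) = 0 := by
  have hC := torusCorrection_mul_self (n := n) (-1 : R)
  rw [neg_one_geom_sum, if_pos hn.add_one, zero_smul] at hC
  rw [torusMatrix_neg_one_pow_succ_self, hn.add_one.neg_one_pow, one_smul,
    one_add_pow_of_mul_self_eq_zero (by rw [smul_mul_smul, hC, smul_zero]), add_eq_left,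
    ← Nat.cast_smul_eq_nsmul R, smul_smul, Nat.cast_mul, Nat.cast_ofNat, mul_comm]
  refine ⟨fun h => ?_, fun h => by rw [h, zero_smul]⟩
  simpa [torusCorrection_last_apply] using congr_fun (congr_fun h (Fin.last n)) 0

end

/-- For `m, n ≥ 2`, the color period of the dihedral quandle `R_{2m}`
(the least positive `p` with `A(−1)^p = 1` over `ZMod (2m)`) is `2n` if `n`
is odd and `m·n` if `n` is even. -/
theorem colorPeriod_dihedral (m n : ℕ) (hm : 2 ≤ m) (hn : 2 ≤ n) :
    IsLeast {p : ℕ | 0 < p ∧ torusMatrix (ZMod (2 * m)) n (-1) ^ p = 1}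
      (if Odd n then 2 * n else m * n) := by
  obtain ⟨n, rfl⟩ : ∃ k, n = k + 1 := ⟨n - 1, by omega⟩
  set A := torusMatrix (ZMod (2 * m)) (n + 1) (-1)
  have two_mul_eq_zero_iff (q : ℕ) : ((2 * q : ℕ) : ZMod (2 * m)) = 0 ↔ m ∣ q := by
    rw [ZMod.natCast_eq_zero_iff, Nat.mul_dvd_mul_iff_left two_pos]
  have hdvd : n + 1 ∣ orderOf A :=
    dvd_orderOf_torusMatrix (ZMod.castHom (dvd_mul_right 2 m) (ZMod 2)) (by simp)
  have hpow : orderOf (A ^ (n + 1)) = if Odd (n + 1) then 2 else m := by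
    split_ifs with hodd
    · have h2 : (2 : ZMod (2 * m)) ≠ 0 := by
        simpa [Nat.dvd_one, show m ≠ 1 by omega] using (two_mul_eq_zero_iff 1).not
      exact orderOf_eq_prime
        (torusMatrix_neg_one_pow_succ_self_sq (by simpa [Nat.odd_add_one] using hodd))
        (torusMatrix_neg_one_pow_succ_self_ne_one (by omega) h2)
    · refine Nat.dvd_right_iff_eq.mp fun q => ?_
      rw [orderOf_dvd_iff_pow_eq_one, torusMatrix_neg_one_pow_succ_self_pow_eq_one_iff
        (by simpa [Nat.odd_add_one] using hodd), two_mul_eq_zero_iff]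
  have hA : orderOf A = if Odd (n + 1) then 2 * (n + 1) else m * (n + 1) := by
    rw [orderOf_eq_mul_orderOf_pow n.add_one_ne_zero hdvd, hpow]
    split_ifs <;> ring
  rw [← hA]
  exact isLeast_orderOf (by rw [hA]; split_ifs <;> positivity)
end

section
/- Let F = GaloisField 2 2 and let T ∈ F satisfy T² + T + 1 = 0, and for n ≥ 2 let A = A(T) be the torus-braid monodromy matrix of size n over F (corresponding to the quandle S₄ = ℤ₂[T,T^{-1}]/(T²+T+1)). Then the color period of A (the least positive integer p with A^p = I) is: p = 2n if 3 divides n, p = 3 if n = 2, and p = 3n otherwise. -/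
namespace ColorPeriodAux

/-- mod for small values -/
theorem mod2 (n a : ℕ) (h : a < 2 * n) : a % n = if a < n then a else a - n := by
  split
  · exact Nat.mod_eq_of_lt ‹_›
  · rw [Nat.mod_eq_sub_mod (by omega), Nat.mod_eq_of_lt (by omega)]

variable {F : Type*} [Field F]

def C (F : Type*) [Field F] (n : ℕ) : Matrix (Fin n) (Fin n) F :=
  Matrix.of fun i j => if (j : ℕ) = ((i : ℕ) + 1) % n then 1 else 0

def E (F : Type*) [Field F] (n : ℕ) : Matrix (Fin n) (Fin n) F :=
  Matrix.of fun i j => if (i : ℕ) = n - 1 then 1 else 0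

theorem C_pow (n k : ℕ) :
    (C F n) ^ k = Matrix.of fun i j : Fin n =>
      if (j : ℕ) = ((i : ℕ) + k) % n then 1 else 0 := by
  induction k with
  | zero =>
    ext i j
    simp [Matrix.one_apply, Nat.mod_eq_of_lt i.isLt, Fin.ext_iff, eq_comm]
  | succ k ih =>
    ext i j
    rw [pow_succ, ih]
    simp only [Matrix.mul_apply, Matrix.of_apply, C]
    have hn : 0 < n := i.pos
    have hm : ((i : ℕ) + k) % n < n := Nat.mod_lt _ hn
    rw [Finset.sum_eq_single (⟨_, hm⟩ : Fin n)]
    · simp [Nat.mod_add_mod, add_assoc]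
    · intro b _ hb
      rw [if_neg, zero_mul]
      intro h
      exact hb (Fin.ext h)
    · intro h; exact absurd (Finset.mem_univ _) h

theorem C_pow_n (n : ℕ) : (C F n) ^ n = 1 := by
  rw [C_pow]
  ext i j
  simp [Matrix.one_apply, Nat.add_mod_right, Nat.mod_eq_of_lt i.isLt, Fin.ext_iff, eq_comm]

theorem A_eq (n : ℕ) (T : F) (hn : 2 ≤ n) :
    torusMatrix F n T = T • C F n + (1 - T) • E F n := by
  ext i j
  have hilt := i.isLt
  simp only [torusMatrix, C, E, Matrix.add_apply, Matrix.smul_apply, Matrix.of_apply,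
    smul_eq_mul]
  by_cases hi : (i : ℕ) = n - 1
  · rw [if_pos hi, if_pos hi]
    have h1 : ((i : ℕ) + 1) % n = 0 := by
      rw [hi, mod2 n _ (by omega)]; split <;> omega
    rw [h1, mul_one]
    by_cases hj : (j : ℕ) = 0
    · rw [if_pos hj, if_pos hj, mul_one]; ring
    · rw [if_neg hj, if_neg hj, mul_zero, zero_add]
  · rw [if_neg hi, if_neg hi]
    have h1 : ((i : ℕ) + 1) % n = (i : ℕ) + 1 := Nat.mod_eq_of_lt (by omega)
    rw [h1, mul_zero, add_zero]
    by_cases hj : (j : ℕ) = (i : ℕ) + 1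
    · rw [if_pos hj, if_pos hj, mul_one]
    · rw [if_neg hj, if_neg hj, mul_zero]

theorem E_mul_C (n : ℕ) : E F n * C F n = (E F n : Matrix (Fin n) (Fin n) F) := by
  ext i j
  simp only [Matrix.mul_apply, E, C, Matrix.of_apply]
  have hn : 0 < n := i.pos
  have hjlt := j.isLt
  by_cases hi : (i : ℕ) = n - 1
  · simp only [if_pos hi, one_mul]
    set m0v : ℕ := if (j : ℕ) = 0 then n - 1 else (j : ℕ) - 1 with hm0v
    have hm0 : m0v < n := by rw [hm0v]; split <;> omega
    have key : (m0v + 1) % n = (j : ℕ) := by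
      rw [mod2 n _ (by omega), hm0v]
      split <;> split <;> omega
    rw [Finset.sum_eq_single (⟨m0v, hm0⟩ : Fin n)]
    · rw [if_pos key.symm]
    · intro b _ hb
      rw [if_neg]
      intro h
      apply hb
      apply Fin.ext
      have hblt := b.isLt
      rw [mod2 n ((b : ℕ) + 1) (by omega)] at h
      show (b : ℕ) = m0v
      rw [hm0v]
      split at h <;> split <;> omega
    · intro h; exact absurd (Finset.mem_univ _) h
  · simp [if_neg hi]

theorem E_mul_E (n : ℕ) : E F n * E F n = (E F n : Matrix (Fin n) (Fin n) F) := by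
  ext i j
  simp only [Matrix.mul_apply, E, Matrix.of_apply]
  have hn : 0 < n := i.pos
  by_cases hi : (i : ℕ) = n - 1
  · simp only [if_pos hi, one_mul]
    rw [Finset.sum_eq_single (⟨n - 1, by omega⟩ : Fin n)]
    · simp
    · intro b _ hb
      rw [if_neg]
      intro h
      exact hb (Fin.ext h)
    · intro h; exact absurd (Finset.mem_univ _) h
  · simp [if_neg hi]

theorem E_mul_A (n : ℕ) (T : F) (hn : 2 ≤ n) :
    E F n * torusMatrix F n T = E F n := by
  rw [A_eq n T hn, Matrix.mul_add, Matrix.mul_smul, Matrix.mul_smul, E_mul_C, E_mul_E,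
    ← add_smul]
  simp

theorem A_pow (n : ℕ) (T : F) (hn : 2 ≤ n) (p : ℕ) :
    (torusMatrix F n T) ^ p = T ^ p • (C F n) ^ p +
      ∑ k ∈ Finset.range p, (T ^ k * (1 - T)) • ((C F n) ^ k * E F n) := by
  induction p with
  | zero => simp
  | succ p ih =>
    have h1 : ∀ k, ((T ^ k * (1 - T)) • ((C F n) ^ k * E F n)) * torusMatrix F n T
        = (T ^ k * (1 - T)) • ((C F n) ^ k * E F n) := by
      intro k
      rw [Matrix.smul_mul, Matrix.mul_assoc, E_mul_A n T hn]
    calc (torusMatrix F n T) ^ (p + 1)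
        = (T ^ p • (C F n) ^ p +
            ∑ k ∈ Finset.range p, (T ^ k * (1 - T)) • ((C F n) ^ k * E F n)) *
            torusMatrix F n T := by rw [pow_succ, ih]
      _ = T ^ p • ((C F n) ^ p * torusMatrix F n T) +
            ∑ k ∈ Finset.range p, (T ^ k * (1 - T)) • ((C F n) ^ k * E F n) := by
          rw [Matrix.add_mul, Matrix.smul_mul, Finset.sum_mul]
          simp only [h1]
      _ = T ^ p • (T • (C F n) ^ (p + 1) + (1 - T) • ((C F n) ^ p * E F n)) +
            ∑ k ∈ Finset.range p, (T ^ k * (1 - T)) • ((C F n) ^ k * E F n) := by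
          rw [A_eq n T hn, Matrix.mul_add, Matrix.mul_smul, Matrix.mul_smul, ← pow_succ]
      _ = T ^ (p + 1) • (C F n) ^ (p + 1) +
            ((T ^ p * (1 - T)) • ((C F n) ^ p * E F n) +
              ∑ k ∈ Finset.range p, (T ^ k * (1 - T)) • ((C F n) ^ k * E F n)) := by
          rw [smul_add, smul_smul, smul_smul, ← pow_succ, add_assoc]
      _ = T ^ (p + 1) • (C F n) ^ (p + 1) +
            ∑ k ∈ Finset.range (p + 1), (T ^ k * (1 - T)) • ((C F n) ^ k * E F n) := by
          rw [Finset.sum_range_succ, add_comm ((T ^ p * (1 - T)) • _)]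

theorem A_pow_apply (n : ℕ) (T : F) (hn : 2 ≤ n) (p : ℕ) (i j : Fin n) :
    ((torusMatrix F n T) ^ p) i j =
      T ^ p * (if (j : ℕ) = ((i : ℕ) + p) % n then 1 else 0) +
      (1 - T) * ∑ k ∈ Finset.range p,
        T ^ k * (if ((i : ℕ) + k) % n = n - 1 then 1 else 0) := by
  have hCE : ∀ k, ((C F n) ^ k * E F n) i j
      = (if ((i : ℕ) + k) % n = n - 1 then (1:F) else 0) := by
    intro k
    rw [C_pow]
    simp only [Matrix.mul_apply, E, Matrix.of_apply]
    have hn0 : 0 < n := i.pos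
    have hm : ((i : ℕ) + k) % n < n := Nat.mod_lt _ hn0
    rw [Finset.sum_eq_single (⟨_, hm⟩ : Fin n)]
    · simp
    · intro b _ hb
      rw [if_neg, zero_mul]
      intro h
      exact hb (Fin.ext h)
    · intro h; exact absurd (Finset.mem_univ _) h
  rw [A_pow n T hn p, Matrix.add_apply, Matrix.smul_apply, Matrix.sum_apply]
  simp only [Matrix.smul_apply, hCE, smul_eq_mul]
  rw [C_pow]
  simp only [Matrix.of_apply, Finset.mul_sum]
  congr 1
  apply Finset.sum_congr rfl
  intro k _
  ring



theorem mod2' (n a : ℕ) (h : a < 2 * n) : a % n = if a < n then a else a - n := by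
  split
  · exact Nat.mod_eq_of_lt ‹_›
  · rw [Nat.mod_eq_sub_mod (by omega), Nat.mod_eq_of_lt (by omega)]

theorem cond_iff (n i k : ℕ) (hi : i < n) :
    (i + k) % n = n - 1 ↔ k % n = n - 1 - i := by
  have hn : 0 < n := by omega
  have hk := Nat.mod_lt k hn
  rw [Nat.add_mod, Nat.mod_eq_of_lt hi, mod2' n (i + k % n) (by omega)]
  split <;> omega

variable {F : Type*} [Field F]

theorem sum_reindex (T : F) (n m r : ℕ) (hr : r < n) :
    ∑ k ∈ Finset.range (n * m), T ^ k * (if k % n = r then 1 else 0)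
      = T ^ r * ∑ t ∈ Finset.range m, (T ^ n) ^ t := by
  induction m with
  | zero => simp
  | succ m ih =>
    have h1 : n * (m + 1) = n * m + n := by ring
    rw [h1, Finset.sum_range_add, ih, Finset.sum_range_succ, mul_add]
    congr 1
    have h2 : ∀ s ∈ Finset.range n,
        T ^ (n * m + s) * (if (n * m + s) % n = r then (1:F) else 0)
          = if s = r then T ^ (n * m + s) else 0 := by
      intro s hs
      rw [Finset.mem_range] at hs
      rw [Nat.mul_add_mod, Nat.mod_eq_of_lt hs]
      split <;> simp
    rw [Finset.sum_congr rfl h2, Finset.sum_ite_eq' (Finset.range n) r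
      (fun s => T ^ (n * m + s)), if_pos (Finset.mem_range.mpr hr)]
    rw [← pow_mul, ← pow_add]
    ring_nf

theorem pow_mod3 (T : F) (hT3 : T ^ 3 = 1) (k : ℕ) : T ^ k = T ^ (k % 3) := by
  conv_lhs => rw [← Nat.div_add_mod k 3]
  rw [pow_add, pow_mul, hT3, one_pow, one_mul]

theorem Tpow_eq_one_iff (T : F) (hT3 : T ^ 3 = 1) (hT1 : T ≠ 1) (hT2 : T ^ 2 ≠ 1)
    (p : ℕ) : T ^ p = 1 ↔ 3 ∣ p := by
  constructor
  · intro h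
    rw [pow_mod3 T hT3] at h
    have h3 : p % 3 = 0 ∨ p % 3 = 1 ∨ p % 3 = 2 := by omega
    rcases h3 with h3 | h3 | h3
    · exact Nat.dvd_of_mod_eq_zero h3
    · rw [h3, pow_one] at h; exact absurd h hT1
    · rw [h3] at h; exact absurd h hT2
  · rintro ⟨q, rfl⟩
    rw [pow_mul, hT3, one_pow]



theorem key' (n : ℕ) (T : F) (hn : 2 ≤ n) (p : ℕ)
    (hA : torusMatrix F n T ^ p = 1) (iv : ℕ) (hiv : iv < n) (jv : ℕ) (hjv : jv < n) :
    T ^ p * (if jv = (iv + p) % n then 1 else 0) +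
      (1 - T) * (∑ k ∈ Finset.range p, T ^ k * (if (iv + k) % n = n - 1 then 1 else 0))
      = if iv = jv then 1 else 0 := by
  have h := A_pow_apply n T hn p ⟨iv, hiv⟩ ⟨jv, hjv⟩
  rw [hA, Matrix.one_apply] at h
  simpa [Fin.ext_iff] using h.symm

/-- membership: if `T^(n*m) = 1` and the geometric sum vanishes, `A^(n*m) = 1`. -/
theorem A_pow_eq_one (n m : ℕ) (T : F) (hn : 2 ≤ n) (hTp : T ^ (n * m) = 1)
    (hg : ∑ t ∈ Finset.range m, (T ^ n) ^ t = 0) :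
    torusMatrix F n T ^ (n * m) = 1 := by
  ext i j
  rw [A_pow_apply n T hn (n * m) i j, Matrix.one_apply, hTp]
  have h1 : ((i : ℕ) + n * m) % n = (i : ℕ) := by
    rw [Nat.add_mul_mod_self_left]
    exact Nat.mod_eq_of_lt i.isLt
  have hS : (∑ k ∈ Finset.range (n * m),
      T ^ k * (if ((i : ℕ) + k) % n = n - 1 then (1:F) else 0)) = 0 := by
    have hc : ∀ k ∈ Finset.range (n * m),
        T ^ k * (if ((i : ℕ) + k) % n = n - 1 then (1:F) else 0)
          = T ^ k * (if k % n = n - 1 - (i : ℕ) then 1 else 0) := by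
      intro k _
      congr 1
      rw [if_congr (cond_iff n (i : ℕ) k i.isLt) rfl rfl]
    rw [Finset.sum_congr rfl hc, sum_reindex T n m (n - 1 - (i : ℕ))
      (by have := i.isLt; omega), hg, mul_zero]
  rw [h1, hS, mul_zero, add_zero]
  by_cases h : i = j
  · rw [if_pos h, if_pos (by rw [h]), mul_one]
  · rw [if_neg h, if_neg (fun hh => h (Fin.ext hh.symm)), mul_zero]

/-- forward extraction for `n ≥ 3`. -/
theorem extract (n p : ℕ) (T : F) (hn : 3 ≤ n) (hT1 : T ≠ 1) (hT2 : T ^ 2 ≠ 1)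
    (hT3 : T ^ 3 = 1) (hA : torusMatrix F n T ^ p = 1) :
    n ∣ p ∧ 3 ∣ p ∧ ∑ t ∈ Finset.range (p / n), (T ^ n) ^ t = 0 := by
  have hn2 : 2 ≤ n := by omega
  have hn0 : 0 < n := by omega
  have K := key' n T hn2 p hA
  -- step 1 : n ∣ p
  have hnp : p % n = 0 := by
    by_contra hr
    have hrlt : p % n < n := Nat.mod_lt _ hn0
    have h0p : (0 + p) % n = p % n := by rw [Nat.zero_add]
    set j2v : ℕ := (if p % n = 1 then 2 else 1) with hj2v
    have hj2 : j2v < n := by rw [hj2v]; split <;> omega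
    have hj2ne : j2v ≠ p % n := by rw [hj2v]; split <;> omega
    have hj2ne0 : j2v ≠ 0 := by rw [hj2v]; split <;> omega
    have e0 := K 0 (by omega) 0 (by omega)
    have e2 := K 0 (by omega) j2v hj2
    rw [h0p, if_neg (fun h => hr h.symm), if_pos rfl, mul_zero, zero_add] at e0
    rw [h0p, if_neg hj2ne, if_neg (fun h => hj2ne0 h.symm), mul_zero, zero_add] at e2
    rw [e2] at e0
    exact one_ne_zero e0.symm
  have hdvd : n ∣ p := Nat.dvd_of_mod_eq_zero hnp
  refine ⟨hdvd, ?_, ?_⟩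
  -- step 2 : 3 ∣ p
  · have e01 := K 0 (by omega) 1 (by omega)
    rw [show (0 + p) % n = 0 by rw [Nat.zero_add, hnp]] at e01
    rw [if_neg (by omega), if_neg (by omega), mul_zero, zero_add] at e01
    have hS0 : (∑ k ∈ Finset.range p, T ^ k * (if (0 + k) % n = n - 1 then (1:F) else 0)) = 0 := by
      rcases mul_eq_zero.mp e01 with h | h
      · exact absurd (by linear_combination -h) hT1
      · exact h
    have e00 := K 0 (by omega) 0 (by omega)
    rw [show (0 + p) % n = 0 by rw [Nat.zero_add, hnp], if_pos rfl, mul_one, hS0,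
      mul_zero, add_zero] at e00
    exact (Tpow_eq_one_iff T hT3 hT1 hT2 p).mp e00
  -- step 3 : geometric sum vanishes
  · have e := K (n - 1) (by omega) 0 (by omega)
    have hmod : (n - 1 + p) % n = n - 1 := by
      rw [Nat.add_mod, hnp, Nat.add_zero, Nat.mod_mod_of_dvd _ dvd_rfl,
        Nat.mod_eq_of_lt (by omega)]
    rw [hmod, if_neg (by omega), if_neg (by omega), mul_zero, zero_add] at e
    have hS1 : (∑ k ∈ Finset.range p,
        T ^ k * (if (n - 1 + k) % n = n - 1 then (1:F) else 0)) = 0 := by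
      rcases mul_eq_zero.mp e with h | h
      · exact absurd (by linear_combination -h) hT1
      · exact h
    have hc : ∀ k ∈ Finset.range p,
        T ^ k * (if (n - 1 + k) % n = n - 1 then (1:F) else 0)
          = T ^ k * (if k % n = 0 then 1 else 0) := by
      intro k _
      congr 1
      have h1 := cond_iff n (n - 1) k (by omega)
      have h2 : (k % n = n - 1 - (n - 1)) ↔ (k % n = 0) := by omega
      rw [if_congr (h1.trans h2) rfl rfl]
    rw [Finset.sum_congr rfl hc] at hS1
    have hp' : p = n * (p / n) := (Nat.mul_div_cancel' hdvd).symm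
    rw [hp', sum_reindex T n (p / n) 0 hn0, pow_zero, one_mul] at hS1
    exact hS1


theorem n2_pow_three (T : F) (hT : T ^ 2 + T + 1 = 0) (h2 : (2 : F) = 0) :
    torusMatrix F 2 T ^ 3 = 1 := by
  have hT3 : T ^ 3 = 1 := by linear_combination (T - 1) * hT
  ext i j
  rw [A_pow_apply 2 T le_rfl 3 i j, Matrix.one_apply,
    Finset.sum_range_succ, Finset.sum_range_succ, Finset.sum_range_one]
  fin_cases i <;> fin_cases j <;> simp
  · linear_combination -hT + T * h2
  · linear_combination T * hT - T ^ 2 * h2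
  · linear_combination hT - T * h2
  · linear_combination -T * hT + T ^ 2 * h2

theorem n2_dvd_three (T : F) (hT1 : T ≠ 1) (hT2 : T ^ 2 ≠ 1) (hT3 : T ^ 3 = 1)
    (p : ℕ) (hA : torusMatrix F 2 T ^ p = 1) : 3 ∣ p := by
  have K := key' 2 T le_rfl p hA
  have e00 := K 0 (by omega) 0 (by omega)
  have e01 := K 0 (by omega) 1 (by omega)
  rw [Nat.zero_add] at e00 e01
  rw [if_pos rfl] at e00
  rw [if_neg (by omega : ¬ (0:ℕ) = 1)] at e01
  have hm : p % 2 = 0 ∨ p % 2 = 1 := by omega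
  rcases hm with hm | hm
  · rw [hm, if_neg (by omega : ¬ (1:ℕ) = 0), mul_zero, zero_add] at e01
    have hS0 : (∑ k ∈ Finset.range p, T ^ k * (if (0 + k) % 2 = 2 - 1 then (1:F) else 0)) = 0 := by
      rcases mul_eq_zero.mp e01 with h | h
      · exact absurd (by linear_combination -h) hT1
      · exact h
    rw [hm, if_pos rfl, mul_one, hS0, mul_zero, add_zero] at e00
    exact (Tpow_eq_one_iff T hT3 hT1 hT2 p).mp e00
  · rw [hm, if_neg (by omega : ¬ (0:ℕ) = 1), mul_zero, zero_add] at e00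
    rw [hm, if_pos rfl, mul_one] at e01
    have hTp : T ^ p = -1 := by linear_combination e01 - e00
    have h2p : T ^ (2 * p) = 1 := by
      rw [mul_comm, pow_mul, hTp]; ring
    have h3 : (3 : ℕ) ∣ 2 * p := (Tpow_eq_one_iff T hT3 hT1 hT2 (2 * p)).mp h2p
    have hco : Nat.Coprime 3 2 := by norm_num
    exact hco.dvd_of_dvd_mul_left h3

end ColorPeriodAux

open ColorPeriodAux in
/-- For the quandle `S₄` (the field `GaloisField 2 2` with `T² + T + 1 = 0`)
and `n ≥ 2`, the color period (the least positive `p` with `A(T)^p = 1`) is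
`2n` if `3 ∣ n`, `3` if `n = 2`, and `3n` otherwise. -/
theorem colorPeriod_S4 (T : GaloisField 2 2) (hT : T ^ 2 + T + 1 = 0)
    (n : ℕ) (hn : 2 ≤ n) :
    IsLeast {p : ℕ | 0 < p ∧ torusMatrix (GaloisField 2 2) n T ^ p = 1}
      (if 3 ∣ n then 2 * n else if n = 2 then 3 else 3 * n) := by
  have h2 : (2 : GaloisField 2 2) = 0 := by
    have := CharP.cast_eq_zero (GaloisField 2 2) 2
    exact_mod_cast this
  have hT3 : T ^ 3 = 1 := by linear_combination (T - 1) * hT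
  have hT1 : T ≠ 1 := by
    intro h
    rw [h] at hT
    exact one_ne_zero (by linear_combination hT - h2 : (1 : GaloisField 2 2) = 0)
  have hT2 : T ^ 2 ≠ 1 := by
    intro h
    rw [pow_succ, h, one_mul] at hT3
    exact hT1 hT3
  constructor
  · -- membership
    split_ifs with h3n hn2
    · -- 3 ∣ n : A^(2n) = 1
      refine ⟨by omega, ?_⟩
      have hTn : T ^ n = 1 := (Tpow_eq_one_iff T hT3 hT1 hT2 n).mpr h3n
      have hTp : T ^ (n * 2) = 1 :=
        (Tpow_eq_one_iff T hT3 hT1 hT2 (n * 2)).mpr (h3n.mul_right 2)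
      have hg : ∑ t ∈ Finset.range 2, (T ^ n) ^ t = 0 := by
        rw [Finset.sum_range_succ, Finset.sum_range_one, pow_zero, pow_one, hTn]
        linear_combination h2
      have := A_pow_eq_one n 2 T hn hTp hg
      rwa [show n * 2 = 2 * n by ring] at this
    · -- n = 2 : A^3 = 1
      subst hn2
      exact ⟨by omega, n2_pow_three T hT h2⟩
    · -- otherwise : A^(3n) = 1
      refine ⟨by omega, ?_⟩
      have hTp : T ^ (n * 3) = 1 := by
        rw [mul_comm, pow_mul, hT3, one_pow]
      have hTn : T ^ n = T ^ (n % 3) := pow_mod3 T hT3 n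
      have hcase : n % 3 = 1 ∨ n % 3 = 2 := by omega
      have hg : ∑ t ∈ Finset.range 3, (T ^ n) ^ t = 0 := by
        rw [Finset.sum_range_succ, Finset.sum_range_succ, Finset.sum_range_one,
          pow_zero, pow_one, hTn]
        rcases hcase with h | h <;> rw [h]
        · linear_combination hT
        · linear_combination (T ^ 2 - T + 1) * hT
      have := A_pow_eq_one n 3 T hn hTp hg
      rwa [show n * 3 = 3 * n by ring] at this
  · -- lower bound
    rintro p ⟨hp0, hp1⟩
    split_ifs with h3n hn2
    · -- 3 ∣ n
      have hn3 : 3 ≤ n := by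
        rcases h3n with ⟨c, rfl⟩; omega
      obtain ⟨hdvd, h3p, hg⟩ := extract n p T hn3 hT1 hT2 hT3 hp1
      have hTn : T ^ n = 1 := (Tpow_eq_one_iff T hT3 hT1 hT2 n).mpr h3n
      rw [hTn] at hg
      simp only [one_pow, Finset.sum_const, Finset.card_range, nsmul_eq_mul,
        mul_one] at hg
      have h2m : 2 ∣ p / n := (CharP.cast_eq_zero_iff (GaloisField 2 2) 2 (p / n)).mp hg
      have hple : 2 * n ∣ p := by
        obtain ⟨c, hc⟩ := h2m
        have hp' : p = n * (p / n) := (Nat.mul_div_cancel' hdvd).symm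
        exact ⟨c, by rw [hp', hc]; ring⟩
      exact Nat.le_of_dvd hp0 hple
    · -- n = 2
      subst hn2
      exact Nat.le_of_dvd hp0 (n2_dvd_three T hT1 hT2 hT3 p hp1)
    · -- otherwise
      have hn3 : 3 ≤ n := by omega
      obtain ⟨hdvd, h3p, -⟩ := extract n p T hn3 hT1 hT2 hT3 hp1
      have hco : Nat.Coprime 3 n := (Nat.prime_three.coprime_iff_not_dvd).mpr h3n
      exact Nat.le_of_dvd hp0 (hco.mul_dvd_of_dvd_of_dvd h3p hdvd)
end

section
/- For every n ≥ 2, let A = A(4) be the torus-braid monodromy matrix of size n over ZMod 9 with T = 4 (corresponding to the Alexander quandle ℤ₉[T,T^{-1}]/(T−4)). Then the color period of A (the least positive integer p with A^p = I) equals 3n. -/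
namespace TorusAux

open Matrix

lemma h9 : (9 : ZMod 9) = 0 := by decide

/-- Closed form for `A^k`, `1 ≤ k ≤ n`. -/
def tB (n k : ℕ) : Matrix (Fin n) (Fin n) (ZMod 9) :=
  Matrix.of fun i j =>
    if (i : ℕ) + k < n then (if (j : ℕ) = (i : ℕ) + k then 3 * (k : ZMod 9) + 1 else 0)
    else if (j : ℕ) + n = (i : ℕ) + k then 3 * (k : ZMod 9) - 2 else -3

lemma tB_one (n : ℕ) (hn : 2 ≤ n) : tB n 1 = torusMatrix (ZMod 9) n 4 := by
  ext i j
  have hi := i.isLt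
  have hj := j.isLt
  simp only [tB, torusMatrix, Matrix.of_apply]
  by_cases h : (i : ℕ) + 1 < n
  · have : (i : ℕ) ≠ n - 1 := by omega
    rw [if_pos h, if_neg this]
    by_cases hji : (j : ℕ) = (i : ℕ) + 1
    · rw [if_pos hji, if_pos hji]; decide
    · rw [if_neg hji, if_neg hji]
  · have hi1 : (i : ℕ) = n - 1 := by omega
    rw [if_neg h, if_pos hi1]
    by_cases hj0 : (j : ℕ) = 0
    · have : (j : ℕ) + n = (i : ℕ) + 1 := by omega
      rw [if_pos this, if_pos hj0]; decide
    · have : ¬ ((j : ℕ) + n = (i : ℕ) + 1) := by omega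
      rw [if_neg this, if_neg hj0]; decide

lemma tB_succ (n k : ℕ) (hn : 2 ≤ n) (hk1 : 1 ≤ k) (hk : k ≤ n - 1) :
    tB n (k + 1) = tB n k * torusMatrix (ZMod 9) n 4 := by
  have hn0 : 0 < n := by omega
  ext i j
  have hi := i.isLt
  have hj := j.isLt
  rw [Matrix.mul_apply]
  set lst : Fin n := ⟨n - 1, by omega⟩ with hlst
  by_cases hj0 : (j : ℕ) = 0
  · -- column 0 of A is the indicator of row n-1
    have hA : ∀ l : Fin n, torusMatrix (ZMod 9) n 4 l j
        = if l = lst then 1 else 0 := by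
      intro l
      simp only [torusMatrix, Matrix.of_apply]
      by_cases hl : (l : ℕ) = n - 1
      · have : l = lst := by apply Fin.ext; simpa [hlst]
        rw [if_pos hl, if_pos hj0, if_pos this]
      · have : l ≠ lst := by
          intro hc; apply hl; rw [hc]
        have h2 : ¬ ((j : ℕ) = (l : ℕ) + 1) := by omega
        rw [if_neg hl, if_neg h2, if_neg this]
    have hsum : ∑ l, tB n k i l * torusMatrix (ZMod 9) n 4 l j
        = tB n k i lst := by
      simp only [hA, mul_ite, mul_one, mul_zero, Finset.sum_ite_eq', Finset.mem_univ, if_pos]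
    rw [hsum]
    simp only [tB, Matrix.of_apply, hlst]
    by_cases h1 : (i : ℕ) + (k + 1) < n
    · have h2 : (i : ℕ) + k < n := by omega
      have h3 : ¬ ((j : ℕ) = (i : ℕ) + (k + 1)) := by omega
      have h4 : ¬ ((n - 1 : ℕ) = (i : ℕ) + k) := by omega
      rw [if_pos h1, if_pos h2, if_neg h3, if_neg h4]
    · by_cases h2 : (i : ℕ) + k < n
      · -- i + k = n - 1
        have h3 : (n - 1 : ℕ) = (i : ℕ) + k := by omega
        have h4 : (j : ℕ) + n = (i : ℕ) + (k + 1) := by omega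
        rw [if_neg h1, if_pos h2, if_pos h3, if_pos h4]
        push_cast
        ring
      · have h3 : ¬ ((j : ℕ) + n = (i : ℕ) + (k + 1)) := by omega
        have h4 : ¬ ((n - 1 : ℕ) + n = (i : ℕ) + k) := by omega
        rw [if_neg h1, if_neg h2, if_neg h3, if_neg h4]
  · -- column j ≥ 1 of A: 4 at row j-1, -3 at row n-1
    set jp : Fin n := ⟨(j : ℕ) - 1, by omega⟩ with hjp
    have hA : ∀ l : Fin n, torusMatrix (ZMod 9) n 4 l j
        = (if l = jp then 4 else 0) + (if l = lst then -3 else 0) := by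
      intro l
      simp only [torusMatrix, Matrix.of_apply]
      by_cases hl : (l : ℕ) = n - 1
      · have hle : l = lst := by apply Fin.ext; simpa [hlst]
        have hne : l ≠ jp := by
          intro hc
          have : (l : ℕ) = (j : ℕ) - 1 := by rw [hc]
          omega
        rw [if_pos hl, if_neg hj0, if_neg hne, if_pos hle]
        decide
      · have hne : l ≠ lst := by intro hc; apply hl; rw [hc]
        rw [if_neg hl, if_neg hne, add_zero]
        by_cases h2 : (j : ℕ) = (l : ℕ) + 1
        · have : l = jp := by apply Fin.ext; simp [hjp]; omega
          rw [if_pos h2, if_pos this]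
        · have : l ≠ jp := by
            intro hc
            have : (l : ℕ) = (j : ℕ) - 1 := by rw [hc]
            omega
          rw [if_neg h2, if_neg this]
    have hsum : ∑ l, tB n k i l * torusMatrix (ZMod 9) n 4 l j
        = tB n k i jp * 4 + tB n k i lst * (-3) := by
      simp only [hA, mul_add, mul_ite, mul_zero, Finset.sum_add_distrib,
        Finset.sum_ite_eq', Finset.mem_univ, if_pos]
    rw [hsum]
    simp only [tB, Matrix.of_apply, hjp, hlst]
    by_cases h1 : (i : ℕ) + (k + 1) < n
    · have h2 : (i : ℕ) + k < n := by omega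
      have h4 : ¬ ((n - 1 : ℕ) = (i : ℕ) + k) := by omega
      rw [if_pos h1, if_pos h2, if_pos h2, if_neg h4, zero_mul, add_zero]
      by_cases h5 : (j : ℕ) = (i : ℕ) + (k + 1)
      · have h6 : ((j : ℕ) - 1 : ℕ) = (i : ℕ) + k := by omega
        rw [if_pos h5, if_pos h6]
        push_cast
        linear_combination (-(k : ZMod 9)) * h9
      · have h6 : ¬ (((j : ℕ) - 1 : ℕ) = (i : ℕ) + k) := by omega
        rw [if_neg h5, if_neg h6, zero_mul]
    · by_cases h2 : (i : ℕ) + k < n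
      · -- i + k = n - 1
        have h3 : (n - 1 : ℕ) = (i : ℕ) + k := by omega
        have h4 : ¬ (((j : ℕ) - 1 : ℕ) = (i : ℕ) + k) := by omega
        have h5 : ¬ ((j : ℕ) + n = (i : ℕ) + (k + 1)) := by omega
        rw [if_neg h1, if_pos h2, if_pos h2, if_pos h3, if_neg h4, if_neg h5, zero_mul, zero_add]
        linear_combination (k : ZMod 9) * h9
      · have h4 : ¬ ((n - 1 : ℕ) + n = (i : ℕ) + k) := by omega
        rw [if_neg h1, if_neg h2, if_neg h2, if_neg h4]
        by_cases h5 : (j : ℕ) + n = (i : ℕ) + (k + 1)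
        · have h6 : ((j : ℕ) - 1 : ℕ) + n = (i : ℕ) + k := by omega
          rw [if_pos h5, if_pos h6]
          push_cast
          linear_combination (-(k : ZMod 9)) * h9
        · have h6 : ¬ (((j : ℕ) - 1 : ℕ) + n = (i : ℕ) + k) := by omega
          rw [if_neg h5, if_neg h6]
          ring

lemma tB_pow (n : ℕ) (hn : 2 ≤ n) :
    ∀ k, 1 ≤ k → k ≤ n → torusMatrix (ZMod 9) n 4 ^ k = tB n k := by
  intro k
  induction k with
  | zero => intro h; omega
  | succ k ih =>
    intro _ hkn
    by_cases hk : k = 0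
    · subst hk
      rw [pow_one, tB_one n hn]
    · have h1 : 1 ≤ k := by omega
      rw [pow_succ, ih h1 (by omega), ← tB_succ n k hn h1 (by omega)]

/-- `Y := A^n - 1`. -/
def Y (n : ℕ) : Matrix (Fin n) (Fin n) (ZMod 9) :=
  Matrix.of fun i j => if i = j then 3 * (n : ZMod 9) - 3 else -3

lemma An_eq (n : ℕ) (hn : 2 ≤ n) :
    torusMatrix (ZMod 9) n 4 ^ n = 1 + Y n := by
  rw [tB_pow n hn n (by omega) le_rfl]
  ext i j
  have hi := i.isLt
  have hj := j.isLt
  simp only [tB, Y, Matrix.of_apply, Matrix.add_apply, Matrix.one_apply]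
  have h1 : ¬ ((i : ℕ) + n < n) := by omega
  rw [if_neg h1]
  by_cases h : i = j
  · have h2 : (j : ℕ) + n = (i : ℕ) + n := by rw [h]
    rw [if_pos h2, if_pos h, if_pos h]
    ring
  · have h2 : ¬ ((j : ℕ) + n = (i : ℕ) + n) := by
      intro hc; apply h; apply Fin.ext; omega
    rw [if_neg h2, if_neg h, if_neg h]
    ring

lemma Y_div3 (n : ℕ) (i j : Fin n) : ∃ c : ZMod 9, Y n i j = 3 * c := by
  simp only [Y, Matrix.of_apply]
  by_cases h : i = j
  · exact ⟨(n : ZMod 9) - 1, by rw [if_pos h]; ring⟩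
  · exact ⟨-1, by rw [if_neg h]; ring⟩

lemma Y_sq (n : ℕ) : Y n * Y n = 0 := by
  ext i j
  rw [Matrix.mul_apply]
  have : ∀ l : Fin n, Y n i l * Y n l j = 0 := by
    intro l
    obtain ⟨c, hc⟩ := Y_div3 n i l
    obtain ⟨d, hd⟩ := Y_div3 n l j
    rw [hc, hd]
    linear_combination (c * d) * h9
  simp [this]

lemma one_add_Y_pow (n : ℕ) : ∀ m : ℕ, (1 + Y n) ^ m = 1 + (m : ZMod 9) • Y n := by
  intro m
  induction m with
  | zero => simp
  | succ m ih =>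
    rw [pow_succ, ih]
    push_cast
    rw [add_smul, one_smul, mul_add, add_mul, add_mul, one_mul, mul_one, one_mul,
      Matrix.smul_mul, Y_sq, smul_zero, add_zero]
    abel

lemma smul3_Y (n : ℕ) : (3 : ZMod 9) • Y n = 0 := by
  ext i j
  obtain ⟨c, hc⟩ := Y_div3 n i j
  rw [Matrix.smul_apply, hc, Matrix.zero_apply, smul_eq_mul]
  linear_combination c * h9

/-- mod 3 reduction: the cyclic permutation matrix. -/
def Q (n : ℕ) : Matrix (Fin n) (Fin n) (ZMod 3) :=
  Matrix.of fun i j => if (j : ℕ) = ((i : ℕ) + 1) % n then 1 else 0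

lemma map_torus (n : ℕ) (hn : 2 ≤ n) :
    (torusMatrix (ZMod 9) n 4).map (ZMod.castHom (by norm_num : (3 : ℕ) ∣ 9) (ZMod 3)) = Q n := by
  ext i j
  have hi := i.isLt
  have hj := j.isLt
  simp only [torusMatrix, Q, Matrix.map_apply, Matrix.of_apply]
  by_cases h : (i : ℕ) = n - 1
  · have h2 : ((i : ℕ) + 1) % n = 0 := by
      have : (i : ℕ) + 1 = n := by omega
      simp [this]
    rw [if_pos h, h2]
    by_cases hj0 : (j : ℕ) = 0
    · rw [if_pos hj0, if_pos hj0]; decide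
    · rw [if_neg hj0, if_neg hj0]; decide
  · have h2 : ((i : ℕ) + 1) % n = (i : ℕ) + 1 := by
      apply Nat.mod_eq_of_lt; omega
    rw [if_neg h, h2]
    by_cases hj1 : (j : ℕ) = (i : ℕ) + 1
    · rw [if_pos hj1, if_pos hj1]; decide
    · rw [if_neg hj1, if_neg hj1]; decide

lemma Q_pow (n : ℕ) (hn : 2 ≤ n) (k : ℕ) :
    Q n ^ k = Matrix.of fun i j : Fin n => if (j : ℕ) = ((i : ℕ) + k) % n then 1 else 0 := by
  induction k with
  | zero =>
    ext i j
    simp only [pow_zero, Matrix.one_apply, Matrix.of_apply, add_zero,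
      Nat.mod_eq_of_lt i.isLt]
    by_cases h : i = j
    · rw [if_pos h, if_pos (by rw [h])]
    · rw [if_neg h, if_neg (by intro hc; exact h (Fin.ext hc.symm))]
  | succ k ih =>
    rw [pow_succ, ih]
    ext i j
    rw [Matrix.mul_apply]
    set l0 : Fin n := ⟨((i : ℕ) + k) % n, Nat.mod_lt _ (by omega)⟩ with hl0
    have hrw : ∀ l : Fin n,
        (Matrix.of fun i j : Fin n => if (j : ℕ) = ((i : ℕ) + k) % n then (1 : ZMod 3) else 0) i l
          * Q n l j = if l = l0 then Q n l j else 0 := by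
      intro l
      simp only [Matrix.of_apply]
      by_cases h : (l : ℕ) = ((i : ℕ) + k) % n
      · rw [if_pos h, one_mul, if_pos (Fin.ext h)]
      · rw [if_neg h, zero_mul, if_neg (by intro hc; exact h (by rw [hc]))]
    rw [Finset.sum_congr rfl fun l _ => hrw l, Finset.sum_ite_eq' Finset.univ l0,
      if_pos (Finset.mem_univ _)]
    simp only [Q, Matrix.of_apply, hl0]
    have h1n : 1 % n = 1 := Nat.mod_eq_of_lt (by omega)
    have hmod : ((i : ℕ) + (k + 1)) % n = (((i : ℕ) + k) % n + 1) % n := by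
      rw [← Nat.add_assoc, Nat.add_mod ((i : ℕ) + k) 1 n, h1n]
    rw [hmod]

end TorusAux

/-- For the Alexander quandle `ℤ₉[T,T⁻¹]/(T−4)` (i.e. `ZMod 9` with `T = 4`)
and every `n ≥ 2`, the color period (the least positive `p` with
`A(4)^p = 1`) equals `3n`. -/
theorem colorPeriod_Z9_T4 (n : ℕ) (hn : 2 ≤ n) :
    IsLeast {p : ℕ | 0 < p ∧ torusMatrix (ZMod 9) n 4 ^ p = 1} (3 * n) := by
  classical
  constructor
  · refine ⟨by omega, ?_⟩
    rw [mul_comm, pow_mul, TorusAux.An_eq n hn, TorusAux.one_add_Y_pow]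
    rw [show ((3 : ℕ) : ZMod 9) = 3 by norm_num, TorusAux.smul3_Y, add_zero]
  · rintro p ⟨hp, hAp⟩
    -- Step 1: n ∣ p via reduction mod 3.
    have hQp : TorusAux.Q n ^ p = 1 := by
      have h := congrArg
        ((ZMod.castHom (by norm_num : (3 : ℕ) ∣ 9) (ZMod 3)).mapMatrix) hAp
      rw [map_pow, map_one, RingHom.mapMatrix_apply, TorusAux.map_torus n hn] at h
      exact h
    rw [TorusAux.Q_pow n hn] at hQp
    have hpn : p % n = 0 := by
      have h := congrFun (congrFun hQp ⟨0, by omega⟩) ⟨p % n, Nat.mod_lt _ (by omega)⟩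
      simp only [Matrix.of_apply, Matrix.one_apply] at h
      rw [if_pos (by simp)] at h
      by_contra hne
      rw [if_neg (by simp [Fin.ext_iff]; omega)] at h
      exact one_ne_zero h
    obtain ⟨m, rfl⟩ := Nat.dvd_of_mod_eq_zero hpn
    have hm1 : 1 ≤ m := by by_contra h; push_neg at h; interval_cases m <;> omega
    -- Step 2: A^(n*m) = 1 + m • Y, hence m • Y = 0.
    have h1 : torusMatrix (ZMod 9) n 4 ^ (n * m)
        = 1 + (m : ZMod 9) • TorusAux.Y n := by
      rw [pow_mul, TorusAux.An_eq n hn, TorusAux.one_add_Y_pow]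
    have h2 : (m : ZMod 9) • TorusAux.Y n = 0 := by
      have h := h1.symm.trans hAp
      exact add_left_cancel (h.trans (add_zero (1 : Matrix (Fin n) (Fin n) (ZMod 9))).symm)
    -- Step 3: look at an off-diagonal entry
    have hY01 : TorusAux.Y n ⟨0, by omega⟩ ⟨1, by omega⟩ = -3 := by
      simp only [TorusAux.Y, Matrix.of_apply]
      rw [if_neg (by simp [Fin.ext_iff])]
    have h3 : (m : ZMod 9) * (-3) = 0 := by
      have h := congrFun (congrFun h2 ⟨0, by omega⟩) ⟨1, by omega⟩
      rwa [Matrix.smul_apply, hY01, Matrix.zero_apply, smul_eq_mul] at h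
    have h4 : ((3 * m : ℕ) : ZMod 9) = 0 := by
      push_cast
      linear_combination -h3
    have h5 : (9 : ℕ) ∣ 3 * m := (ZMod.natCast_eq_zero_iff _ _).mp h4
    have h6 : 3 ≤ m := by omega
    calc 3 * n = n * 3 := by ring
    _ ≤ n * m := Nat.mul_le_mul_left n h6
end
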